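/- arXiv:1710.02830 — 4 statements merged into one kernel-verified Lean document; each statement's English description precedes it below -/
import Mathlib

section
/- Let (X,A,μ,T) be an ergodic probability-preserving system and (E_k)_{k≥1} a sequence in A with μ(E_k)>0. Then the following are equivalent: (a) μ(E_k) → 0 as k → ∞; (b) ν(E_k) → 0 as k → ∞ for all probability measures ν ≪ μ; (c) φ_{E_k} → ∞ in μ-measure as k → ∞; (d) φ_{E_k} → ∞ in ν-measure as k → ∞ for all probability measures ν ≪ μ; (e) φ_{E_k} → ∞ in ν-measure as k → ∞ for some probability measure ν ≪ μ. -/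
/-!
(a) ⇒ (b) is the absolute continuity of `ν` with respect to `μ`, and (b) ⇒ (d) is the union
bound `ν(φ_E ≤ N) ≤ ∑_{n=1}^N ν(T⁻ⁿE)` applied to the measures `Tⁿ_* ν ≪ μ`.

The substance is (e) ⇒ (a). Let `U f = f ∘ T` be the Koopman operator on `L²(μ)` and let
`g ≤ dν/dμ` be a bounded truncation of the density with `∫ g ≥ 1 - ε`. Then
`ν(φ_E ≤ N) ≥ N⁻¹ ∑_{n=1}^N ν(T⁻ⁿE) ≥ ⟪1_E, N⁻¹ ∑_{n=1}^N (U†)ⁿ g⟫`.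
The fixed vectors of the contraction `U†` are those of `U`, i.e. the constants by ergodicity, so
by von Neumann's mean ergodic theorem these averages of `(U†)ⁿ g` converge in norm to `∫ g`.
Norm convergence is uniform over the indicators `1_E`, so a single `N` gives
`ν(φ_E ≤ N) ≥ μ(E) - 2ε` for every `E`, which forces `μ(E_k) → 0`.
-/

open MeasureTheory Filter Set Topology
open scoped ENNReal

/-- First hitting time `φ_E` (values in `ℝ≥0∞`; `∞` if the orbit never hits `E`). -/
noncomputable def hitTime {X : Type*} (T : X → X) (E : Set X) (x : X) : ℝ≥0∞ :=
  sInf {t : ℝ≥0∞ | ∃ n : ℕ, 1 ≤ n ∧ T^[n] x ∈ E ∧ t = (n : ℝ≥0∞)}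

/-- First hitting time, `ℕ`-valued (junk value `0` if the orbit never hits `E`). -/
noncomputable def hitN {X : Type*} (T : X → X) (E : Set X) (x : X) : ℕ :=
  sInf {n : ℕ | 1 ≤ n ∧ T^[n] x ∈ E}

/-- First return map `T_Y`. -/
noncomputable def returnMap {X : Type*} (T : X → X) (Y : Set X) (x : X) : X :=
  T^[hitN T Y x] x

/-- Normalized restriction `μ_Y = μ(Y)⁻¹ μ(Y ∩ ·)`. -/
noncomputable def condMeas {X : Type*} [MeasurableSpace X] (μ : Measure X) (Y : Set X) :
    Measure X := (μ Y)⁻¹ • μ.restrict Y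

/-- Convergence in distribution, at continuity points of the limit distribution function,
of `[0,∞]`-valued random variables `f k` on `(X, ν)` to a random variable `R` on `(Ω, P)`. -/
def TendstoInDistrib {X Ω : Type*} [MeasurableSpace X] [MeasurableSpace Ω]
    (ν : Measure X) (f : ℕ → X → ℝ≥0∞) (P : Measure Ω) (R : Ω → ℝ≥0∞) : Prop :=
  ∀ t : ℝ, ContinuousAt (fun s : ℝ => (P {ω | R ω ≤ ENNReal.ofReal s}).toReal) t →
    Tendsto (fun k => (ν {x | f k x ≤ ENNReal.ofReal t}).toReal) atTop
      (𝓝 ((P {ω | R ω ≤ ENNReal.ofReal t}).toReal))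

/-- `f k → ∞` in `ν`-measure. -/
def TendstoInfInMeasure {X : Type*} [MeasurableSpace X] (ν : Measure X)
    (f : ℕ → X → ℝ≥0∞) : Prop :=
  ∀ N : ℕ, 1 ≤ N → Tendsto (fun k => ν {x | f k x ≤ (N : ℝ≥0∞)}) atTop (𝓝 0)

/-- Points of `Y` can only reach `E` via `E'`. -/
def OnlyReachVia {X : Type*} [MeasurableSpace X] (μ : Measure X) (T : X → X)
    (Y E E' : Set X) : Prop :=
  ∀ n : ℕ, ∀ᵐ x ∂μ.restrict Y, T^[n] x ∈ E → ∃ j ≤ n, T^[j] x ∈ E'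

open scoped InnerProductSpace InnerProduct

section Hilbert

variable {𝕜 H : Type*} [RCLike 𝕜] [NormedAddCommGroup H] [InnerProductSpace 𝕜 H]
  [CompleteSpace H]

lemma ContinuousLinearMap.adjoint_apply_eq_self {A : H →L[𝕜] H} (hA : ‖A‖ ≤ 1) {x : H}
    (hx : A x = x) : (A†) x = x := by
  refine eq_of_norm_le_re_inner_eq_norm_sq (𝕜 := 𝕜) ?_ ?_
  · simpa using (A†).le_of_opNorm_le (c := 1) (by rwa [LinearIsometryEquiv.norm_map]) x
  · rw [adjoint_inner_left, hx, inner_self_eq_norm_sq]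

lemma ContinuousLinearMap.inner_adjoint_iterate (A : H →L[𝕜] H) (n : ℕ) (x y : H) :
    ⟪x, (A†)^[n] y⟫_𝕜 = ⟪A^[n] x, y⟫_𝕜 := by
  rw [← FunLike.coe_pow_eq_iterate, ← FunLike.coe_pow_eq_iterate, ← star_eq_adjoint, ← star_pow,
    star_eq_adjoint, adjoint_inner_right]

end Hilbert

section

variable {X : Type*}

lemma hitTime_le_natCast_iff (T : X → X) (s : Set X) (x : X) (N : ℕ) :
    hitTime T s x ≤ N ↔ ∃ n, 1 ≤ n ∧ n ≤ N ∧ T^[n] x ∈ s := by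
  constructor
  · intro h
    by_contra! hN
    have : ((N + 1 : ℕ) : ℝ≥0∞) ≤ hitTime T s x := by
      refine le_sInf ?_
      rintro _ ⟨n, hn, hns, rfl⟩
      exact_mod_cast Nat.succ_le_of_lt (not_le.mp fun h' => (hN n hn h').elim hns)
    exact absurd (this.trans h) (by norm_cast; omega)
  · rintro ⟨n, hn, hnN, hns⟩
    exact (sInf_le ⟨n, hn, hns, rfl⟩ : hitTime T s x ≤ n).trans (Nat.cast_le.mpr hnN)

lemma setOf_hitTime_le_natCast (T : X → X) (s : Set X) (N : ℕ) :
    {x | hitTime T s x ≤ N} = ⋃ n ∈ Finset.Icc 1 N, T^[n] ⁻¹' s := by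
  ext x
  simp [hitTime_le_natCast_iff, and_assoc]

variable [MeasurableSpace X]

lemma tendsto_measure_zero_of_absolutelyContinuous {ι : Type*} {l : Filter ι}
    {μ ν : Measure X} [SigmaFinite μ] [IsFiniteMeasure ν] (hac : ν ≪ μ) {s : ι → Set X}
    (h : Tendsto (fun i => μ (s i)) l (𝓝 0)) : Tendsto (fun i => ν (s i)) l (𝓝 0) := by
  have hfin : ∫⁻ x, ν.rnDeriv μ x ∂μ ≠ ∞ := by
    rw [Measure.lintegral_rnDeriv hac]; exact measure_ne_top ν univ
  simpa only [Measure.setLIntegral_rnDeriv hac] using tendsto_setLIntegral_zero hfin h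

lemma tendstoInfInMeasure_hitTime_of_tendsto_preimage (ν : Measure X) (T : X → X)
    (s : ℕ → Set X) (h : ∀ n ≥ 1, Tendsto (fun k => ν (T^[n] ⁻¹' s k)) atTop (𝓝 0)) :
    TendstoInfInMeasure ν (fun k => hitTime T (s k)) := by
  intro N _
  have hsum : Tendsto (fun k => ∑ n ∈ Finset.Icc 1 N, ν (T^[n] ⁻¹' s k)) atTop (𝓝 0) := by
    simpa using tendsto_finsetSum (Finset.Icc 1 N) fun n hn => h n (Finset.mem_Icc.1 hn).1
  refine tendsto_of_tendsto_of_tendsto_of_le_of_le tendsto_const_nhds hsum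
    (fun k => zero_le) fun k => ?_
  rw [setOf_hitTime_le_natCast]
  exact measure_biUnion_finset_le _ _

lemma MeasureTheory.MeasurePreserving.map_absolutelyContinuous {Y : Type*}
    [MeasurableSpace Y] {μ ν : Measure X} {μY : Measure Y} {f : X → Y}
    (hf : MeasurePreserving f μ μY) (hac : ν ≪ μ) : ν.map f ≪ μY :=
  hf.map_eq ▸ hac.map hf.measurable

lemma MeasureTheory.MeasurePreserving.tendstoInfInMeasure_hitTime {μ ν : Measure X}
    {T : X → X} (hT : MeasurePreserving T μ μ) {s : ℕ → Set X} (hs : ∀ k, MeasurableSet (s k))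
    (h : ∀ ν : Measure X, IsProbabilityMeasure ν → ν ≪ μ →
      Tendsto (fun k => ν (s k)) atTop (𝓝 0))
    [IsProbabilityMeasure ν] (hac : ν ≪ μ) : TendstoInfInMeasure ν fun k => hitTime T (s k) := by
  refine tendstoInfInMeasure_hitTime_of_tendsto_preimage ν T s fun n _ => ?_
  have hTn := hT.iterate n
  simpa [Measure.map_apply hTn.measurable (hs _)] using
    h _ (Measure.isProbabilityMeasure_map hTn.measurable.aemeasurable)
      (hTn.map_absolutelyContinuous hac)

section Koopman

variable {μ : Measure X} {T : X → X}

lemma MeasureTheory.L2.inner_const_left [IsFiniteMeasure μ] (c : ℝ) (g : Lp ℝ 2 μ) :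
    ⟪Lp.const 2 μ c, g⟫_ℝ = c * ∫ x, g x ∂μ := by
  rw [← indicatorConstLp_univ, L2.inner_indicatorConstLp_eq_setIntegral_inner, setIntegral_univ,
    ← integral_const_mul]
  simp [mul_comm]

lemma MeasureTheory.integral_Lp_const [IsProbabilityMeasure μ] (c : ℝ) :
    ∫ x, Lp.const 2 μ c x ∂μ = c := by
  rw [integral_congr_ae (Lp.coeFn_const 2 μ c)]
  simp

lemma MeasureTheory.norm_indicatorConstLp_one_le [IsProbabilityMeasure μ] {s : Set X}
    (hs : MeasurableSet s) :
    ‖indicatorConstLp 2 hs (measure_ne_top μ s) (1 : ℝ)‖ ≤ 1 := by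
  refine norm_indicatorConstLp_le.trans ?_
  rw [norm_one, one_mul]
  exact Real.rpow_le_one measureReal_nonneg measureReal_le_one (by norm_num)

noncomputable def koopman (hT : MeasurePreserving T μ μ) : Lp ℝ 2 μ →L[ℝ] Lp ℝ 2 μ :=
  (Lp.compMeasurePreservingₗᵢ ℝ T hT).toContinuousLinearMap

lemma norm_koopman_le (hT : MeasurePreserving T μ μ) : ‖koopman hT‖ ≤ 1 :=
  LinearIsometry.norm_toContinuousLinearMap_le _

lemma koopman_iterate_indicatorConstLp [IsFiniteMeasure μ] (hT : MeasurePreserving T μ μ)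
    (n : ℕ) {s : Set X} (hs : MeasurableSet s) :
    (koopman hT)^[n] (indicatorConstLp 2 hs (measure_ne_top μ s) (1 : ℝ)) =
      indicatorConstLp 2 (hs.preimage (hT.iterate n).measurable) (measure_ne_top μ _) 1 := by
  change (Lp.compMeasurePreserving T hT)^[n] _ = _
  rw [Lp.compMeasurePreserving_iterate]
  rfl

lemma koopman_const [IsFiniteMeasure μ] (hT : MeasurePreserving T μ μ) (c : ℝ) :
    koopman hT (Lp.const 2 μ c) = Lp.const 2 μ c := by
  change Lp.compMeasurePreserving T hT _ = _
  rw [← indicatorConstLp_univ, Lp.indicatorConstLp_compMeasurePreserving]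
  simp_rw [preimage_univ]

lemma Ergodic.exists_eq_const_of_koopman_apply_eq_self [IsFiniteMeasure μ] (hT : Ergodic T μ)
    {g : Lp ℝ 2 μ} (hg : koopman hT.toMeasurePreserving g = g) : ∃ c, g = Lp.const 2 μ c := by
  have hcomp : (g : X → ℝ) ∘ T =ᵐ[μ] g :=
    (Lp.coeFn_compMeasurePreserving g _).symm.trans
      (.of_eq (congrArg (fun f : Lp ℝ 2 μ => (f : X → ℝ)) hg))
  obtain ⟨c, hc⟩ := hT.ae_eq_const_of_ae_eq_comp_ae (Lp.aestronglyMeasurable g) hcomp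
  exact ⟨c, Lp.ext (hc.trans (Lp.coeFn_const 2 μ c).symm)⟩

lemma Ergodic.tendsto_birkhoffAverage_adjoint_koopman [IsProbabilityMeasure μ]
    (hT : Ergodic T μ) (g : Lp ℝ 2 μ) :
    Tendsto (birkhoffAverage ℝ ((koopman hT.toMeasurePreserving)†) id · g) atTop
      (𝓝 (Lp.const 2 μ (∫ x, g x ∂μ))) := by
  set U := koopman hT.toMeasurePreserving
  have hU : ‖U‖ ≤ 1 := norm_koopman_le _
  have hL : ‖U†‖ ≤ 1 := by rwa [LinearIsometryEquiv.norm_map]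
  convert (U†).tendsto_birkhoffAverage_orthogonalProjection hL g using 2
  rw [← Submodule.starProjection_apply]
  refine (Submodule.eq_starProjection_of_mem_of_inner_eq_zero ?_ fun w hw => ?_).symm
  · exact ContinuousLinearMap.adjoint_apply_eq_self hU (koopman_const _ _)
  · have hUw : U w = w := by
      simpa using ContinuousLinearMap.adjoint_apply_eq_self hL (x := w) hw
    obtain ⟨c, rfl⟩ := hT.exists_eq_const_of_koopman_apply_eq_self hUw
    rw [inner_sub_left, real_inner_comm, L2.inner_const_left, real_inner_comm,
      L2.inner_const_left, integral_Lp_const, sub_self]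

lemma inner_indicatorConstLp_birkhoffAverage_adjoint_koopman [IsFiniteMeasure μ]
    (hT : MeasurePreserving T μ μ) {s : Set X} (hs : MeasurableSet s) (g : Lp ℝ 2 μ) (N : ℕ) :
    ⟪indicatorConstLp 2 hs (measure_ne_top μ s) (1 : ℝ),
        birkhoffAverage ℝ ((koopman hT)†) id N g⟫_ℝ =
      (N : ℝ)⁻¹ * ∑ n ∈ Finset.range N, ∫ x in T^[n] ⁻¹' s, g x ∂μ := by
  rw [birkhoffAverage, birkhoffSum, real_inner_smul_right, inner_sum]
  congr 1
  refine Finset.sum_congr rfl fun n _ => ?_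
  rw [id, ContinuousLinearMap.inner_adjoint_iterate, koopman_iterate_indicatorConstLp,
    L2.inner_indicatorConstLp_one]

lemma Ergodic.eventually_abs_average_setIntegral_preimage_sub_le [IsProbabilityMeasure μ]
    (hT : Ergodic T μ) (g : Lp ℝ 2 μ) {ε : ℝ} (hε : 0 < ε) :
    ∀ᶠ N : ℕ in atTop, ∀ s, MeasurableSet s →
      |(N : ℝ)⁻¹ * ∑ n ∈ Finset.range N, ∫ x in T^[n] ⁻¹' s, g x ∂μ -
        μ.real s * ∫ x, g x ∂μ| ≤ ε := by
  filter_upwards [Metric.tendsto_nhds.1 (hT.tendsto_birkhoffAverage_adjoint_koopman g) ε hε]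
    with N hN s hs
  set χ := indicatorConstLp 2 hs (measure_ne_top μ s) (1 : ℝ)
  have hconst : ⟪χ, Lp.const 2 μ (∫ x, g x ∂μ)⟫_ℝ = μ.real s * ∫ x, g x ∂μ := by
    rw [real_inner_comm, L2.inner_const_left, integral_indicatorConstLp, smul_eq_mul, mul_one,
      mul_comm]
  rw [← inner_indicatorConstLp_birkhoffAverage_adjoint_koopman hT.toMeasurePreserving hs,
    ← hconst, ← inner_sub_right]
  calc _ ≤ ‖χ‖ * ‖birkhoffAverage ℝ ((koopman hT.toMeasurePreserving)†) id N g -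
        Lp.const 2 μ (∫ x, g x ∂μ)‖ := abs_real_inner_le_norm _ _
    _ ≤ 1 * ε := by
      rw [← dist_eq_norm]
      exact mul_le_mul (norm_indicatorConstLp_one_le hs) hN.le dist_nonneg zero_le_one
    _ = ε := one_mul ε

end Koopman

lemma exists_memLp_top_setIntegral_le_measureReal {μ ν : Measure X} [IsFiniteMeasure μ]
    [IsFiniteMeasure ν] (hac : ν ≪ μ) {ε : ℝ} (hε : 0 < ε) :
    ∃ g : X → ℝ, MemLp g ∞ μ ∧ (∀ s, ∫ x in s, g x ∂μ ≤ ν.real s) ∧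
      ν.real univ - ε < ∫ x, g x ∂μ := by
  set f := fun x => (ν.rnDeriv μ x).toReal
  have hf : Integrable f μ := Measure.integrable_toReal_rnDeriv
  have hmeas (c : ℕ) : AEStronglyMeasurable (fun x => min (f x) c) μ :=
    ((ν.measurable_rnDeriv μ).ennreal_toReal.min measurable_const).aestronglyMeasurable
  have hnorm (c : ℕ) (x : X) : ‖min (f x) c‖ = min (f x) c :=
    Real.norm_of_nonneg (le_min ENNReal.toReal_nonneg c.cast_nonneg)
  have htend : Tendsto (fun c : ℕ => ∫ x, min (f x) c ∂μ) atTop (𝓝 (ν.real univ)) := by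
    rw [← Measure.integral_toReal_rnDeriv hac]
    refine tendsto_integral_of_dominated_convergence f hmeas hf
      (fun c => ae_of_all _ fun x => (hnorm c x).trans_le (min_le_left _ _))
      (ae_of_all _ fun x => tendsto_const_nhds.congr' ?_)
    filter_upwards [eventually_ge_atTop ⌈f x⌉₊] with c hc
    exact (min_eq_left ((Nat.le_ceil _).trans (by exact_mod_cast hc))).symm
  obtain ⟨c, hc⟩ := ((tendsto_order.1 htend).1 _ (sub_lt_self _ hε)).exists
  have hgc : MemLp (fun x => min (f x) c) ∞ μ :=
    memLp_top_of_bound (hmeas c) c (ae_of_all _ fun x => (hnorm c x).trans_le (min_le_right _ _))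
  refine ⟨_, hgc, fun s => ?_, hc⟩
  rw [← Measure.setIntegral_toReal_rnDeriv hac s]
  exact setIntegral_mono (hgc.integrable le_top).integrableOn hf.integrableOn
    fun x => min_le_left _ _

lemma Ergodic.exists_measureReal_le_measureReal_hitTime_le_add {μ ν : Measure X} {T : X → X}
    [IsProbabilityMeasure μ] [IsProbabilityMeasure ν] (hT : Ergodic T μ) (hac : ν ≪ μ)
    {ε : ℝ} (hε : 0 < ε) :
    ∃ N : ℕ, 1 ≤ N ∧ ∀ s, MeasurableSet s → μ.real s ≤ ν.real {x | hitTime T s x ≤ N} + ε := by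
  obtain ⟨g, hg, hgν, hgint⟩ := exists_memLp_top_setIntegral_le_measureReal hac (half_pos hε)
  have hg2 : MemLp g 2 μ := hg.mono_exponent le_top
  have hG (s : Set X) : ∫ x in s, hg2.toLp g x ∂μ = ∫ x in s, g x ∂μ :=
    integral_congr_ae (ae_restrict_of_ae hg2.coeFn_toLp)
  obtain ⟨N, hN, hN1⟩ := ((hT.eventually_abs_average_setIntegral_preimage_sub_le (hg2.toLp g)
    (half_pos hε)).and (eventually_ge_atTop 1)).exists
  refine ⟨N, hN1, fun s hs => ?_⟩
  set R := ν.real {x | hitTime T s x ≤ N}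
  -- shifting by `T⁻¹` turns the times `0, …, N - 1` into the times `1, …, N`
  have hterm : ∀ n ∈ Finset.range N, ∫ x in T^[n] ⁻¹' (T ⁻¹' s), hg2.toLp g x ∂μ ≤ R := by
    intro n hn
    refine (hG _).trans_le ((hgν _).trans (measureReal_mono fun x hx => ?_))
    exact (hitTime_le_natCast_iff T s x N).2
      ⟨n + 1, by omega, Finset.mem_range.mp hn, by rwa [Function.iterate_succ_apply']⟩
  have havg :
      (N : ℝ)⁻¹ * ∑ n ∈ Finset.range N, ∫ x in T^[n] ⁻¹' (T ⁻¹' s), hg2.toLp g x ∂μ ≤ R :=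
    calc _ ≤ (N : ℝ)⁻¹ * (N * R) := by
          gcongr
          simpa using Finset.sum_le_card_nsmul _ _ _ hterm
      _ = R := inv_mul_cancel_left₀ (by positivity) R
  have hμs : μ.real (T ⁻¹' s) = μ.real s := hT.toMeasurePreserving.measureReal_preimage
    hs.nullMeasurableSet
  have hclose := (abs_le.1 (hN (T ⁻¹' s) (hs.preimage hT.measurable))).1
  rw [hμs, ← setIntegral_univ, hG, setIntegral_univ] at hclose
  have hle : μ.real s * (1 - ε / 2) ≤ μ.real s * ∫ x, g x ∂μ := by
    gcongr
    simpa using hgint.le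
  nlinarith [measureReal_nonneg (μ := μ) (s := s), measureReal_le_one (μ := μ) (s := s)]

lemma Ergodic.tendsto_measure_zero_of_tendstoInfInMeasure_hitTime {μ ν : Measure X}
    {T : X → X} [IsProbabilityMeasure μ] [IsProbabilityMeasure ν] (hT : Ergodic T μ)
    (hac : ν ≪ μ) {s : ℕ → Set X} (hs : ∀ k, MeasurableSet (s k))
    (h : TendstoInfInMeasure ν fun k => hitTime T (s k)) :
    Tendsto (fun k => μ (s k)) atTop (𝓝 0) := by
  rw [← ENNReal.tendsto_toReal_zero_iff]
  change Tendsto (fun k => μ.real (s k)) atTop (𝓝 0)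
  refine Metric.tendsto_nhds.2 fun ε hε => ?_
  obtain ⟨N, hN1, hN⟩ := hT.exists_measureReal_le_measureReal_hitTime_le_add hac (half_pos hε)
  have hν : Tendsto (fun k => ν.real {x | hitTime T (s k) x ≤ N}) atTop (𝓝 0) :=
    (ENNReal.tendsto_toReal_zero_iff fun _ => measure_ne_top _ _).2 (h N hN1)
  filter_upwards [(tendsto_order.1 hν).2 _ (half_pos hε)] with k hk
  rw [Real.dist_0_eq_abs, abs_of_nonneg measureReal_nonneg]
  linarith [hN (s k) (hs k)]

end

theorem stmt1_general {X : Type*} [MeasurableSpace X]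
    (μ : Measure X) [IsProbabilityMeasure μ] (T : X → X) (hT : Ergodic T μ)
    (E : ℕ → Set X) (hEm : ∀ k, MeasurableSet (E k)) :
    List.TFAE
      [ Tendsto (fun k => μ (E k)) atTop (𝓝 0),
        ∀ ν : Measure X, IsProbabilityMeasure ν → ν ≪ μ →
          Tendsto (fun k => ν (E k)) atTop (𝓝 0),
        TendstoInfInMeasure μ (fun k => hitTime T (E k)),
        ∀ ν : Measure X, IsProbabilityMeasure ν → ν ≪ μ →
          TendstoInfInMeasure ν (fun k => hitTime T (E k)),
        ∃ ν : Measure X, IsProbabilityMeasure ν ∧ ν ≪ μ ∧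
          TendstoInfInMeasure ν (fun k => hitTime T (E k)) ] := by
  tfae_have 1 → 2 := fun h ν _ hac => tendsto_measure_zero_of_absolutelyContinuous hac h
  tfae_have 2 → 4 := fun h ν _ hac =>
    hT.toMeasurePreserving.tendstoInfInMeasure_hitTime hEm h hac
  tfae_have 4 → 3 := fun h => h μ inferInstance .rfl
  tfae_have 3 → 5 := fun h => ⟨μ, inferInstance, .rfl, h⟩
  tfae_have 5 → 1 := fun ⟨ν, _, hac, h⟩ =>
    hT.tendsto_measure_zero_of_tendstoInfInMeasure_hitTime hac hEm h
  tfae_finish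

/-- **Characterizing asymptotically rare sequences.**
For an ergodic probability-preserving system `(X,𝒜,μ,T)` and sets `E_k` of positive
measure, the following are equivalent: (a) `μ(E_k) → 0`; (b) `ν(E_k) → 0` for all
probabilities `ν ≪ μ`; (c) `φ_{E_k} → ∞` in `μ`-measure; (d) `φ_{E_k} → ∞` in
`ν`-measure for all probabilities `ν ≪ μ`; (e) `φ_{E_k} → ∞` in `ν`-measure for some
probability `ν ≪ μ`. -/
theorem stmt1 {X : Type*} [MeasurableSpace X]
    (μ : Measure X) [IsProbabilityMeasure μ] (T : X → X) (hT : Ergodic T μ)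
    (E : ℕ → Set X) (hEm : ∀ k, MeasurableSet (E k)) (hEpos : ∀ k, 0 < μ (E k)) :
    List.TFAE
      [ Tendsto (fun k => μ (E k)) atTop (𝓝 0),
        ∀ ν : Measure X, IsProbabilityMeasure ν → ν ≪ μ →
          Tendsto (fun k => ν (E k)) atTop (𝓝 0),
        TendstoInfInMeasure μ (fun k => hitTime T (E k)),
        ∀ ν : Measure X, IsProbabilityMeasure ν → ν ≪ μ →
          TendstoInfInMeasure ν (fun k => hitTime T (E k)),
        ∃ ν : Measure X, IsProbabilityMeasure ν ∧ ν ≪ μ ∧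
          TendstoInfInMeasure ν (fun k => hitTime T (E k)) ] :=
  stmt1_general μ T hT E hEm
end

section
/- Let (X,A,μ,T) be an ergodic probability-preserving system, (E_k)_{k≥1} a sequence of asymptotically rare events, Y ∈ A of positive measure, and (E'_k)_{k≥1} a sequence of measurable subsets of Y such that, for every k ≥ 1, points of Y can only reach E_k via E'_k. If there exists a constant M ≥ 0 such that E'_k ⊆ ∪_{m=0}^{M} T^{-m}E_k for all k ≥ 1, then (E'_k) is asymptotically rare and μ(E'_k)·(φ_{E_k} − φ_{E'_k}) → 0 in μ_Y-measure as k → ∞. -/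
/-!
Every visit to `E'_k` is followed by a visit to `E_k` within `M` steps, so
`φ_{E_k} ≤ φ_{E'_k} + M` and `μ(E'_k) ≤ (M + 1) μ(E_k)`. Conversely, for a.e. `x ∈ Y ∖ E'_k`
the orbit meets `E'_k` at a positive time no later than it meets `E_k`, so
`φ_{E'_k} ≤ φ_{E_k}` there. Hence `|φ_{E_k} − φ_{E'_k}| ≤ M` off `E'_k`, and the `μ_Y`-measure
of the bad set is at most `μ(E'_k)/μ(Y) → 0`. Positivity of `μ(E'_k)` comes from ergodicity:
almost every orbit visits `E_k`, hence `E'_k`.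
-/

open MeasureTheory Filter Set Topology
open scoped ENNReal

section HitTime

variable {X : Type*} {T : X → X} {E E' : Set X} {x : X}

lemma hitTime_le_of_iterate_mem {n : ℕ} (hn : 1 ≤ n) (hx : T^[n] x ∈ E) :
    hitTime T E x ≤ n :=
  sInf_le ⟨n, hn, hx, rfl⟩

lemma exists_hitTime_eq_of_ne_top (h : hitTime T E x ≠ ⊤) :
    ∃ n : ℕ, 1 ≤ n ∧ T^[n] x ∈ E ∧ hitTime T E x = n := by
  set S := {n : ℕ | 1 ≤ n ∧ T^[n] x ∈ E}
  have hS : S.Nonempty := by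
    by_contra hS
    refine h (sInf_eq_top.2 ?_)
    rintro t ⟨n, hn, hnE, rfl⟩
    exact (hS ⟨n, hn, hnE⟩).elim
  obtain ⟨hn, hnE⟩ := Nat.sInf_mem hS
  refine ⟨sInf S, hn, hnE, le_antisymm (hitTime_le_of_iterate_mem hn hnE) (le_sInf ?_)⟩
  rintro t ⟨m, hm, hmE, rfl⟩
  exact_mod_cast Nat.sInf_le (show m ∈ S from ⟨hm, hmE⟩)

lemma hitTime_tsub_hitTime_le {M : ℕ}
    (hM : E' ⊆ ⋃ m ∈ Finset.range (M + 1), T^[m] ⁻¹' E) :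
    hitTime T E x - hitTime T E' x ≤ M := by
  by_cases htop : hitTime T E' x = ⊤
  · simp [htop]
  obtain ⟨j, hj, hjE', hjeq⟩ := exists_hitTime_eq_of_ne_top htop
  obtain ⟨m, hm, hmE⟩ : ∃ m < M + 1, T^[m] (T^[j] x) ∈ E := by
    simpa using hM hjE'
  rw [← Function.iterate_add_apply] at hmE
  rw [tsub_le_iff_right, hjeq]
  calc hitTime T E x ≤ ((m + j : ℕ) : ℝ≥0∞) := hitTime_le_of_iterate_mem (by omega) hmE
    _ ≤ M + j := by push_cast; gcongr; exact_mod_cast Nat.lt_succ_iff.1 hm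

lemma hitTime_le_hitTime_of_notMem (hreach : ∀ n, T^[n] x ∈ E → ∃ j ≤ n, T^[j] x ∈ E')
    (hx : x ∉ E') : hitTime T E' x ≤ hitTime T E x := by
  by_cases htop : hitTime T E x = ⊤
  · simp [htop]
  obtain ⟨n, -, hnE, hneq⟩ := exists_hitTime_eq_of_ne_top htop
  obtain ⟨j, hjn, hjE'⟩ := hreach n hnE
  have hj : 1 ≤ j := Nat.one_le_iff_ne_zero.2 (by rintro rfl; exact hx hjE')
  rw [hneq]
  exact (hitTime_le_of_iterate_mem hj hjE').trans (by exact_mod_cast hjn)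

lemma hitTime_tsub_add_tsub_le {M : ℕ} (hM : E' ⊆ ⋃ m ∈ Finset.range (M + 1), T^[m] ⁻¹' E)
    (hle : hitTime T E' x ≤ hitTime T E x) :
    (hitTime T E x - hitTime T E' x) + (hitTime T E' x - hitTime T E x) ≤ M := by
  rw [tsub_eq_zero_of_le hle, add_zero]
  exact hitTime_tsub_hitTime_le hM

end HitTime

section Measure

variable {X : Type*} [MeasurableSpace X] {μ : Measure X} {T : X → X} {Y E E' : Set X}

lemma MeasureTheory.MeasurePreserving.measure_le_of_subset_biUnion_preimage_iterate
    (hT : MeasurePreserving T μ μ) {M : ℕ}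
    (hM : E' ⊆ ⋃ m ∈ Finset.range (M + 1), T^[m] ⁻¹' E) :
    μ E' ≤ (M + 1) * μ E :=
  calc μ E' ≤ ∑ m ∈ Finset.range (M + 1), μ (T^[m] ⁻¹' E) :=
        (measure_mono hM).trans (measure_biUnion_finset_le _ _)
    _ ≤ ∑ _m ∈ Finset.range (M + 1), μ E :=
        Finset.sum_le_sum fun m _ => (hT.iterate m).measure_preimage_le E
    _ = (M + 1) * μ E := by simp

lemma Ergodic.ae_exists_iterate_mem [IsFiniteMeasure μ] (hT : Ergodic T μ)
    (hE : MeasurableSet E) (hE0 : μ E ≠ 0) : ∀ᵐ x ∂μ, ∃ n, T^[n] x ∈ E := by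
  set B := ⋃ n, T^[n] ⁻¹' E
  have hB : MeasurableSet B := .iUnion fun n => hT.measurable.iterate n hE
  have hTB : T ⁻¹' B ⊆ B := by
    intro x hx
    obtain ⟨n, hn⟩ := mem_iUnion.1 hx
    exact mem_iUnion.2 ⟨n + 1, by rwa [mem_preimage, Function.iterate_succ_apply]⟩
  rcases hT.ae_empty_or_univ_of_preimage_ae_le hB.nullMeasurableSet hTB.eventuallyLE with h | h
  · refine absurd (measure_mono_null (subset_iUnion (fun n => T^[n] ⁻¹' E) 0) ?_) hE0
    rw [measure_congr h, measure_empty]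
  · filter_upwards [h.mem_iff] with x hx
    exact mem_iUnion.1 (hx.2 trivial)

lemma OnlyReachVia.measure_ne_zero [IsFiniteMeasure μ] (h : OnlyReachVia μ T Y E E')
    (hT : Ergodic T μ) (hE : MeasurableSet E) (hE0 : μ E ≠ 0) (hY : μ Y ≠ 0) :
    μ E' ≠ 0 := by
  intro hE'0
  have hnever : ∀ᵐ x ∂μ, ∀ j, T^[j] x ∉ E' := ae_all_iff.2 fun j =>
    measure_eq_zero_iff_ae_notMem.1 ((hT.toMeasurePreserving.iterate j).preimage_null hE'0)
  have hfalse : ∀ᵐ _ ∂μ.restrict Y, False := by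
    filter_upwards [ae_restrict_of_ae (hT.ae_exists_iterate_mem hE hE0), ae_all_iff.2 h,
      ae_restrict_of_ae hnever] with x ⟨n, hn⟩ hreach hx
    obtain ⟨j, -, hj⟩ := hreach n hn
    exact hx j hj
  exact hY (Measure.restrict_eq_zero.1 (ae_eq_bot.1 (eventually_false_iff_eq_bot.1 hfalse)))

lemma OnlyReachVia.ae_hitTime_le (h : OnlyReachVia μ T Y E E') :
    ∀ᵐ x ∂μ.restrict Y, x ∉ E' → hitTime T E' x ≤ hitTime T E x := by
  filter_upwards [ae_all_iff.2 h] with x hreach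
  exact hitTime_le_hitTime_of_notMem hreach

lemma condMeas_le_of_ae_le {S S' : Set X} (h : S ≤ᵐ[μ.restrict Y] S') :
    condMeas μ Y S ≤ (μ Y)⁻¹ * μ S' :=
  calc condMeas μ Y S = (μ Y)⁻¹ * μ.restrict Y S := rfl
    _ ≤ (μ Y)⁻¹ * μ S' :=
        mul_le_mul_right ((measure_mono_ae h).trans (μ.restrict_apply_le _ _)) _

end Measure

theorem stmt5_general {X : Type*} [MeasurableSpace X]
    (μ : Measure X) [IsProbabilityMeasure μ] (T : X → X) (hT : Ergodic T μ)
    (E : ℕ → Set X) (hEm : ∀ k, MeasurableSet (E k))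
    (hEpos : ∀ k, 0 < μ (E k)) (hErare : Tendsto (fun k => μ (E k)) atTop (𝓝 0))
    (Y : Set X) (hYpos : 0 < μ Y)
    (E' : ℕ → Set X)
    (honly : ∀ k, OnlyReachVia μ T Y (E k) (E' k))
    (M : ℕ) (hM : ∀ k, E' k ⊆ ⋃ m ∈ Finset.range (M + 1), T^[m] ⁻¹' (E k)) :
    ((∀ k, 0 < μ (E' k)) ∧ Tendsto (fun k => μ (E' k)) atTop (𝓝 0)) ∧
      (∀ ε : ℝ≥0∞, 0 < ε →
        Tendsto (fun k => condMeas μ Y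
          {x | ε ≤ μ (E' k) * ((hitTime T (E k) x - hitTime T (E' k) x) +
                (hitTime T (E' k) x - hitTime T (E k) x))}) atTop (𝓝 0)) := by
  have hE'pos : ∀ k, 0 < μ (E' k) := fun k => pos_iff_ne_zero.2 <|
    (honly k).measure_ne_zero hT (hEm k) (hEpos k).ne' hYpos.ne'
  have hE'rare : Tendsto (fun k => μ (E' k)) atTop (𝓝 0) := by
    have h := ENNReal.Tendsto.const_mul hErare (Or.inr (by simp : (M + 1 : ℝ≥0∞) ≠ ⊤))
    rw [mul_zero] at h
    exact tendsto_of_tendsto_of_tendsto_of_le_of_le tendsto_const_nhds h (fun _ => zero_le)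
      fun k => hT.toMeasurePreserving.measure_le_of_subset_biUnion_preimage_iterate (hM k)
  refine ⟨⟨hE'pos, hE'rare⟩, fun ε hε => ?_⟩
  have hsmall : ∀ᶠ k in atTop, μ (E' k) * M < ε := by
    have h := ENNReal.Tendsto.mul_const hE'rare (Or.inr (ENNReal.natCast_ne_top M))
    rw [zero_mul] at h
    exact h.eventually (gt_mem_nhds hε)
  have hbound := ENNReal.Tendsto.const_mul hE'rare (Or.inr (ENNReal.inv_ne_top.2 hYpos.ne'))
  rw [mul_zero] at hbound
  refine tendsto_of_tendsto_of_tendsto_of_le_of_le' tendsto_const_nhds hbound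
    (Eventually.of_forall fun _ => zero_le) ?_
  filter_upwards [hsmall] with k hk
  refine condMeas_le_of_ae_le ?_
  filter_upwards [(honly k).ae_hitTime_le] with x hle hxε
  by_contra hx
  exact hk.not_ge (hxε.trans (by gcongr; exact hitTime_tsub_add_tsub_le (hM k) (hle hx)))

/-- **Hitting-time statistics via inducing, extended version (part b).**
If points of `Y` can only reach `E_k` via `E'_k ⊆ Y` and, for some constant `M`,
`E'_k ⊆ ⋃_{m=0}^M T^{-m}E_k` for all `k`, then `(E'_k)` is asymptotically rare and
`μ(E'_k)·(φ_{E_k} − φ_{E'_k}) → 0` in `μ_Y`-measure. -/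
theorem stmt5 {X : Type*} [MeasurableSpace X]
    (μ : Measure X) [IsProbabilityMeasure μ] (T : X → X) (hT : Ergodic T μ)
    (E : ℕ → Set X) (hEm : ∀ k, MeasurableSet (E k))
    (hEpos : ∀ k, 0 < μ (E k)) (hErare : Tendsto (fun k => μ (E k)) atTop (𝓝 0))
    (Y : Set X) (hYm : MeasurableSet Y) (hYpos : 0 < μ Y)
    (E' : ℕ → Set X) (hE'm : ∀ k, MeasurableSet (E' k)) (hE'Y : ∀ k, E' k ⊆ Y)
    (honly : ∀ k, OnlyReachVia μ T Y (E k) (E' k))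
    (M : ℕ) (hM : ∀ k, E' k ⊆ ⋃ m ∈ Finset.range (M + 1), T^[m] ⁻¹' (E k)) :
    ((∀ k, 0 < μ (E' k)) ∧ Tendsto (fun k => μ (E' k)) atTop (𝓝 0)) ∧
      (∀ ε : ℝ≥0∞, 0 < ε →
        Tendsto (fun k => condMeas μ Y
          {x | ε ≤ μ (E' k) * ((hitTime T (E k) x - hitTime T (E' k) x) +
                (hitTime T (E' k) x - hitTime T (E k) x))}) atTop (𝓝 0)) :=
  stmt5_general μ T hT E hEm hEpos hErare Y hYpos E' honly M hM
end

section
/- Let (X,T,ξ) be a Folklore map on X=[0,1] with two increasing branches, ξ={(0,c),(c,1)} for some c ∈ (0,1), so that the branch on (0,c) extends continuously to [0,c] with T(0)=0, and let μ ≪ λ be its invariant probability measure with continuous density h. Let (E_k)_{k≥1} be a sequence of intervals containing the fixed point x*=0 with λ(E_k) → 0, let Y := (c,1) and E'_k := Y ∩ T^{-1}E_k. Then μ((0,c) ∩ T^{-1}E_k) ∼ μ(E_k)/T'(0^+) and consequently μ(E'_k) ∼ θ·μ(E_k) as k → ∞, where θ := 1 − 1/T'(0^+) and T'(0^+) is the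 right derivative of T at 0. -/
open MeasureTheory Filter Set Topology
open scoped ENNReal

/-- A **Folklore map** on the bounded interval `X = (a,b)`: a piecewise monotonic system
with countably many open-interval cylinders `Z ∈ ξ` covering `X` up to a Lebesgue null
set, each branch a `C²` homeomorphism (strictly monotone and `C²` on its cylinder) onto
`X` mod `λ` (piecewise onto), uniformly expanding, and satisfying Adler's condition. -/
structure IsFolklore (a b : ℝ) (T : ℝ → ℝ) (ξ : Set (Set ℝ)) : Prop where
  lt : a < b
  countable : ξ.Countable
  cyl : ∀ Z ∈ ξ, ∃ u v : ℝ, u < v ∧ a ≤ u ∧ v ≤ b ∧ Z = Set.Ioo u v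
  disj : ξ.Pairwise Disjoint
  full : volume (Set.Ioo a b \ ⋃₀ ξ) = 0
  maps : Set.MapsTo T (Set.Icc a b) (Set.Icc a b)
  mono : ∀ Z ∈ ξ, StrictMonoOn T Z ∨ StrictAntiOn T Z
  smooth : ∀ Z ∈ ξ, ContDiffOn ℝ 2 T Z
  onto : ∀ Z ∈ ξ, volume (Set.Ioo a b \ T '' Z) = 0
  expanding : ∃ ρ : ℝ, 1 < ρ ∧ ∀ Z ∈ ξ, ∀ x ∈ Z, ρ ≤ |deriv T x|
  adler : ∃ C : ℝ, ∀ Z ∈ ξ, ∀ x ∈ Z, |deriv (deriv T) x| ≤ C * (deriv T x) ^ 2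

/-!
The expansion `|T'| ≥ ρ > 1` on the monotone branch `(0, c)` gives `T x ≥ ρ x` there, hence
`d ≥ ρ > 0`, and it confines the preimage `(0, c) ∩ T⁻¹E_k` of `E_k`, which is `[0, s_k)` or
`[0, s_k]` with `s_k = λ(E_k)`, to the region near `0` where `T x ≈ d x`. So this preimage is
squeezed between the intervals `(0, s_k / (d ± t))` and has Lebesgue measure `∼ s_k / d`. Both
sets shrink to `0`, where the density is continuous and positive, so their `μ`-measures are
`∼ h(0) s_k / d` and `∼ h(0) s_k`. For the second branch, invariance gives `μ(E_k) = μ(T⁻¹E_k)`,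
and up to the `μ`-null set `{0, c, 1} ∪ [0, 1]ᶜ` the preimage `T⁻¹E_k` is the disjoint union of
its parts in the two cylinders.
-/

theorem tendsto_of_forall_eventually_mem_Icc {ι α β : Type*} [TopologicalSpace β]
    [LinearOrder β] [OrderTopology β] {l : Filter ι} {l' : Filter α} [l'.NeBot] {f : ι → β}
    {g G : α → β} {b : β} (hg : Tendsto g l' (𝓝 b)) (hG : Tendsto G l' (𝓝 b))
    (hf : ∀ᶠ t in l', ∀ᶠ i in l, f i ∈ Icc (g t) (G t)) : Tendsto f l (𝓝 b) := by
  refine tendsto_order.2 ⟨fun a ha => ?_, fun a ha => ?_⟩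
  · obtain ⟨t, hgt, ht⟩ := ((hg.eventually (lt_mem_nhds ha)).and hf).exists
    exact ht.mono fun i hi => hgt.trans_le hi.1
  · obtain ⟨t, hGt, ht⟩ := ((hG.eventually (gt_mem_nhds ha)).and hf).exists
    exact ht.mono fun i hi => hi.2.trans_lt hGt

section Density

variable {X : Type*} [MeasurableSpace X] {ν : Measure X} {K S : Set X} {h : X → ℝ}

theorem withDensity_toReal_div_mem_Icc {a b : ℝ} (hS : MeasurableSet S) (hSK : S ⊆ K)
    (hpos : 0 < ν S) (hfin : ν S ≠ ∞) (hb : 0 ≤ b) (hab : ∀ x ∈ S, h x ∈ Icc a b) :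
    ((ν.restrict K).withDensity (fun x => ENNReal.ofReal (h x)) S).toReal / (ν S).toReal
      ∈ Icc a b := by
  have hμS : (ν.restrict K).withDensity (fun x => ENNReal.ofReal (h x)) S
      = ∫⁻ x in S, ENNReal.ofReal (h x) ∂ν := by
    rw [withDensity_apply _ hS, Measure.restrict_restrict hS, inter_eq_self_of_subset_left hSK]
  have hlow : ENNReal.ofReal a * ν S ≤ ∫⁻ x in S, ENNReal.ofReal (h x) ∂ν := by
    rw [← setLIntegral_const]
    exact setLIntegral_mono' hS fun x hx => ENNReal.ofReal_le_ofReal (hab x hx).1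
  have hupp : ∫⁻ x in S, ENNReal.ofReal (h x) ∂ν ≤ ENNReal.ofReal b * ν S := by
    rw [← setLIntegral_const]
    exact setLIntegral_mono' hS fun x hx => ENNReal.ofReal_le_ofReal (hab x hx).2
  have hbS : ENNReal.ofReal b * ν S ≠ ∞ := ENNReal.mul_ne_top ENNReal.ofReal_ne_top hfin
  have hν : 0 < (ν S).toReal := ENNReal.toReal_pos hpos.ne' hfin
  rw [hμS, mem_Icc, le_div_iff₀ hν, div_le_iff₀ hν]
  constructor
  · calc a * (ν S).toReal ≤ (ENNReal.ofReal a * ν S).toReal := by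
          rw [ENNReal.toReal_mul, ENNReal.toReal_ofReal']
          exact mul_le_mul_of_nonneg_right (le_max_left _ _) ENNReal.toReal_nonneg
      _ ≤ _ := ENNReal.toReal_mono (ne_top_of_le_ne_top hbS hupp) hlow
  · calc _ ≤ (ENNReal.ofReal b * ν S).toReal := ENNReal.toReal_mono hbS hupp
      _ = b * (ν S).toReal := by rw [ENNReal.toReal_mul, ENNReal.toReal_ofReal hb]

theorem withDensity_restrict_pos
    (hf : AEMeasurable (fun x => ENNReal.ofReal (h x)) (ν.restrict K)) (hK : MeasurableSet K)
    (hSK : S ⊆ K) (hh : ∀ x ∈ S, 0 < h x) (hS : 0 < ν S) :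
    0 < (ν.restrict K).withDensity (fun x => ENNReal.ofReal (h x)) S := by
  rw [pos_iff_ne_zero, Ne, withDensity_apply_eq_zero' hf, Measure.restrict_apply' hK]
  refine fun h0 => hS.ne' (measure_mono_null (fun x hx => ?_) h0)
  exact ⟨⟨(ENNReal.ofReal_pos.2 (hh x hx)).ne', hx⟩, hSK hx⟩

theorem tendsto_withDensity_toReal_div [TopologicalSpace X] {x₀ : X}
    (hh : ContinuousWithinAt h K x₀) (hh₀ : 0 ≤ h x₀) {ι : Type*} {l : Filter ι}
    {S : ι → Set X} (hSm : ∀ i, MeasurableSet (S i)) (hS : Tendsto S l (𝓝 x₀).smallSets)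
    (hSK : ∀ i, S i ⊆ K) (hpos : ∀ᶠ i in l, 0 < ν (S i)) (hfin : ∀ᶠ i in l, ν (S i) ≠ ∞) :
    Tendsto (fun i => ((ν.restrict K).withDensity (fun x => ENNReal.ofReal (h x)) (S i)).toReal
      / (ν (S i)).toReal) l (𝓝 (h x₀)) := by
  have hlim : ∀ σ : ℝ, Tendsto (fun t => h x₀ + σ * t) (𝓝[>] 0) (𝓝 (h x₀)) := fun σ => by
    have : ContinuousAt (fun t => h x₀ + σ * t) 0 := by fun_prop
    simpa using this.tendsto.mono_left nhdsWithin_le_nhds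
  refine tendsto_of_forall_eventually_mem_Icc (hlim (-1)) (hlim 1) ?_
  filter_upwards [self_mem_nhdsWithin] with t (ht : 0 < t)
  obtain ⟨V, hV, hVK⟩ := mem_nhdsWithin_iff_exists_mem_nhds_inter.1
    (hh (Icc_mem_nhds (sub_lt_self _ ht) (lt_add_of_pos_right _ ht)))
  filter_upwards [hS.eventually (eventually_smallSets_subset.2 hV), hpos, hfin]
    with i hSV hi hi'
  simp only [neg_one_mul, one_mul, ← sub_eq_add_neg]
  exact withDensity_toReal_div_mem_Icc (hSm i) (hSK i) hi hi' (by linarith)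
    fun x hx => hVK ⟨hSV hx, hSK i hx⟩

end Density

theorem measure_inter_Ioo_add_measure_inter_Ioo {μ : Measure ℝ} (hac : μ ≪ volume)
    {a b c : ℝ} (hc : c ∈ Ioo a b) (hsupp : μ (Icc a b)ᶜ = 0) {F : Set ℝ}
    (hF : MeasurableSet F) : μ (Ioo a c ∩ F) + μ (Ioo c b ∩ F) = μ F := by
  have hvol : (Ioo a c ∪ Ioo c b : Set ℝ) =ᵐ[volume] Icc a b :=
    ((ae_eq_refl (Ioo a c)).union Ioo_ae_eq_Ico).trans <| by
      rw [Ioo_union_Ico_eq_Ioo hc.1 hc.2.le]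
      exact Ioo_ae_eq_Icc
  have hμ : (Ioo a c ∪ Ioo c b : Set ℝ) =ᵐ[μ] univ :=
    (hac.ae_eq hvol).trans (ae_eq_univ.2 hsupp)
  have hdisj : Disjoint (Ioo a c ∩ F) (Ioo c b ∩ F) :=
    (Ico_disjoint_Ico_same.mono Ioo_subset_Ico_self Ioo_subset_Ico_self).mono
      inter_subset_left inter_subset_left
  rw [← measure_union hdisj (measurableSet_Ioo.inter hF), ← union_inter_distrib_right,
    measure_congr (hμ.inter (ae_eq_refl F)), univ_inter]

theorem Set.OrdConnected.Ico_subset_and_subset_Icc_volume {E : Set ℝ} {a : ℝ}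
    (hE : E.OrdConnected) (ha : a ∈ E) (hEa : E ⊆ Ici a) (hbdd : BddAbove E) :
    Ico a (a + (volume E).toReal) ⊆ E ∧ E ⊆ Icc a (a + (volume E).toReal) := by
  have hIco : Ico a (sSup E) ⊆ E := fun x hx => by
    obtain ⟨y, hy, hxy⟩ := exists_lt_of_lt_csSup ⟨a, ha⟩ hx.2
    exact hE.out ha hy ⟨hx.1, hxy.le⟩
  have hIcc : E ⊆ Icc a (sSup E) := fun x hx => ⟨hEa hx, le_csSup hbdd hx⟩
  have hvol : volume E = ENNReal.ofReal (sSup E - a) := le_antisymm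
    ((measure_mono hIcc).trans_eq Real.volume_Icc)
    (Real.volume_Ico.symm.trans_le (measure_mono hIco))
  have hsup : a + (volume E).toReal = sSup E := by
    rw [hvol, ENNReal.toReal_ofReal (sub_nonneg.2 (le_csSup hbdd ha)), add_sub_cancel]
  exact hsup ▸ ⟨hIco, hIcc⟩

section Branch

variable {f : ℝ → ℝ} {a c d ρ : ℝ}

theorem HasDerivWithinAt.eventually_mul_sub_lt_sub_lt_mul (hd : HasDerivWithinAt f d (Ici a) a)
    {t : ℝ} (ht : 0 < t) :
    ∀ᶠ x in 𝓝[>] a, (d - t) * (x - a) < f x - f a ∧ f x - f a < (d + t) * (x - a) := by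
  have hslope : Tendsto (slope f a) (𝓝[>] a) (𝓝 d) :=
    (hasDerivWithinAt_iff_tendsto_slope' (lt_irrefl a)).1 (hasDerivWithinAt_Ioi_iff_Ici.2 hd)
  filter_upwards [hslope.eventually (Ioo_mem_nhds (sub_lt_self d ht) (lt_add_of_pos_right d ht)),
    self_mem_nhdsWithin] with x hx (hax : a < x)
  rwa [slope_def_field, lt_div_iff₀ (sub_pos.2 hax), div_lt_iff₀ (sub_pos.2 hax)] at hx

theorem HasDerivWithinAt.le_of_mul_sub_le (hd : HasDerivWithinAt f d (Ici a) a) (hac : a < c)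
    (hgrowth : ∀ x ∈ Ioo a c, ρ * (x - a) ≤ f x - f a) : ρ ≤ d := by
  by_contra! hdρ
  obtain ⟨x, hx, hxc⟩ := ((hd.eventually_mul_sub_lt_sub_lt_mul (sub_pos.2 hdρ)).and
    (Ioo_mem_nhdsGT hac)).exists
  rw [add_sub_cancel] at hx
  exact (hgrowth x hxc).not_gt hx.2

theorem mul_sub_le_sub_of_le_abs_deriv (hf : ContinuousWithinAt f (Ici a) a)
    (hdiff : DifferentiableOn ℝ f (Ioo a c)) (hmono : MonotoneOn f (Ioo a c))
    (hρ : ∀ x ∈ Ioo a c, ρ ≤ |deriv f x|) {x : ℝ} (hx : x ∈ Ioo a c) :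
    ρ * (x - a) ≤ f x - f a := by
  have hcont : ContinuousOn f (Ico a c) := by
    intro y hy
    rcases hy.1.eq_or_lt with rfl | hay
    · exact hf.mono Ico_subset_Ici_self
    · exact ((hdiff y ⟨hay, hy.2⟩).differentiableAt
        (Ioo_mem_nhds hay hy.2)).continuousAt.continuousWithinAt
  have hderiv : ∀ y ∈ Ioo a c, ρ ≤ deriv f y := fun y hy => by
    have hnonneg : 0 ≤ deriv f y := by
      rw [← derivWithin_of_isOpen isOpen_Ioo hy]
      exact hmono.derivWithin_nonneg
    simpa [abs_of_nonneg hnonneg] using hρ y hy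
  rw [← interior_Ico] at hdiff hderiv
  exact (convex_Ico a c).mul_sub_le_image_sub_of_le_deriv hcont hdiff hderiv a
    (left_mem_Ico.2 (hx.1.trans hx.2)) x (Ioo_subset_Ico_self hx) hx.1.le

end Branch

section Preimage

variable {T : ℝ → ℝ} {c d ρ : ℝ} {ι : Type*} {l : Filter ι} {s : ι → ℝ} {E : ι → Set ℝ}

theorem eventually_Ioo_subset_inter_preimage_subset_Ioo (hc : 0 < c) (hρ : 0 < ρ)
    (hT0 : T 0 = 0) (hd : HasDerivWithinAt T d (Ici 0) 0)
    (hgrowth : ∀ x ∈ Ioo 0 c, ρ * x ≤ T x) (hs : Tendsto s l (𝓝 0))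
    (hE : ∀ i, Ico 0 (s i) ⊆ E i ∧ E i ⊆ Icc 0 (s i)) {t : ℝ} (ht : 0 < t) (htd : t < d) :
    ∀ᶠ i in l, Ioo 0 (s i / (d + t)) ⊆ Ioo 0 c ∩ T ⁻¹' E i ∧
      Ioo 0 c ∩ T ⁻¹' E i ⊆ Ioo 0 (s i / (d - t)) := by
  obtain ⟨δ, hδ, hδT⟩ :=
    mem_nhdsGT_iff_exists_Ioo_subset.1 (hd.eventually_mul_sub_lt_sub_lt_mul ht)
  have hT : ∀ x ∈ Ioo 0 δ, (d - t) * x < T x ∧ T x < (d + t) * x := fun x hx => by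
    simpa [hT0] using hδT hx
  have hρd : ρ ≤ d := hd.le_of_mul_sub_le hc (by simpa [hT0] using hgrowth)
  filter_upwards [hs.eventually (gt_mem_nhds (mul_pos hρ (lt_min hδ hc)))] with i hi
  have hsρ : s i / ρ < min δ c := (div_lt_iff₀' hρ).2 hi
  constructor
  · intro x hx
    have hs0 : 0 < s i := (div_pos_iff_of_pos_right (by linarith)).1 (hx.1.trans hx.2)
    have hxδc : x < min δ c :=
      (hx.2.trans_le (div_le_div_of_nonneg_left hs0.le hρ (by linarith))).trans hsρ
    obtain ⟨hTl, hTu⟩ := hT x ⟨hx.1, hxδc.trans_le (min_le_left _ _)⟩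
    refine ⟨⟨hx.1, hxδc.trans_le (min_le_right _ _)⟩, (hE i).1 ⟨?_, ?_⟩⟩
    · exact (mul_pos (sub_pos.2 htd) hx.1).le.trans hTl.le
    · exact hTu.trans ((lt_div_iff₀' (by linarith)).1 hx.2)
  · rintro x ⟨hxc, hxE⟩
    have hTs : T x ≤ s i := ((hE i).2 hxE).2
    have hxδ : x < δ := ((le_div_iff₀' hρ).2 ((hgrowth x hxc).trans hTs)).trans_lt
      (hsρ.trans_le (min_le_left _ _))
    exact ⟨hxc.1, (lt_div_iff₀' (sub_pos.2 htd)).2 ((hT x ⟨hxc.1, hxδ⟩).1.trans_le hTs)⟩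

theorem tendsto_volume_inter_preimage_div (hc : 0 < c) (hρ : 0 < ρ) (hd0 : 0 < d)
    (hT0 : T 0 = 0) (hd : HasDerivWithinAt T d (Ici 0) 0)
    (hgrowth : ∀ x ∈ Ioo 0 c, ρ * x ≤ T x) (hs : Tendsto s l (𝓝 0)) (hs0 : ∀ i, 0 < s i)
    (hE : ∀ i, Ico 0 (s i) ⊆ E i ∧ E i ⊆ Icc 0 (s i)) :
    Tendsto (fun i => (volume (Ioo 0 c ∩ T ⁻¹' E i)).toReal / s i) l (𝓝 (1 / d)) := by
  have hlim : ∀ σ : ℝ, Tendsto (fun t => 1 / (d + σ * t)) (𝓝[>] 0) (𝓝 (1 / d)) := fun σ => by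
    have : ContinuousAt (fun t => 1 / (d + σ * t)) 0 :=
      continuousAt_const.div (by fun_prop) (by simpa using hd0.ne')
    simpa using this.tendsto.mono_left nhdsWithin_le_nhds
  refine tendsto_of_forall_eventually_mem_Icc (hlim 1) (hlim (-1)) ?_
  filter_upwards [self_mem_nhdsWithin, Ioo_mem_nhdsGT hd0] with t (ht : 0 < t) htd
  filter_upwards [eventually_Ioo_subset_inter_preimage_subset_Ioo hc hρ hT0 hd hgrowth hs hE ht
    htd.2] with i ⟨hlow, hupp⟩
  have hvol : ∀ r, 0 ≤ r → (volume (Ioo 0 r)).toReal = r := fun r hr => by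
    rw [Real.volume_Ioo, sub_zero, ENNReal.toReal_ofReal hr]
  have hfin : volume (Ioo 0 c ∩ T ⁻¹' E i) ≠ ∞ :=
    ((measure_mono inter_subset_left).trans_lt measure_Ioo_lt_top).ne
  rw [mem_Icc, le_div_iff₀ (hs0 i), div_le_iff₀ (hs0 i), one_mul, neg_one_mul, ← sub_eq_add_neg,
    one_div_mul_eq_div, one_div_mul_eq_div]
  constructor
  · rw [← hvol _ (div_nonneg (hs0 i).le (by linarith))]
    exact ENNReal.toReal_mono hfin (measure_mono hlow)
  · rw [← hvol _ (div_nonneg (hs0 i).le (by linarith [htd.2]))]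
    exact ENNReal.toReal_mono measure_Ioo_lt_top.ne (measure_mono hupp)

theorem tendsto_measure_inter_preimage_div_measure {h : ℝ → ℝ} {μ : Measure ℝ}
    (hμ : μ = (volume.restrict (Icc 0 1)).withDensity fun x => ENNReal.ofReal (h x))
    (hh : ContinuousWithinAt h (Icc 0 1) 0) (hh0 : 0 < h 0) (hc : c ∈ Ioc 0 1) (hρ : 0 < ρ)
    (hd0 : 0 < d) (hT0 : T 0 = 0) (hd : HasDerivWithinAt T d (Ici 0) 0)
    (hgrowth : ∀ x ∈ Ioo 0 c, ρ * x ≤ T x) (hTm : Measurable T)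
    (hEm : ∀ i, MeasurableSet (E i)) (hEsub : ∀ i, E i ⊆ Icc 0 1)
    (hE : ∀ i, Ico 0 (volume (E i)).toReal ⊆ E i ∧ E i ⊆ Icc 0 (volume (E i)).toReal)
    (hEpos : ∀ i, 0 < volume (E i)) (hEsmall : Tendsto (fun i => volume (E i)) l (𝓝 0)) :
    Tendsto (fun i => (μ (Ioo 0 c ∩ T ⁻¹' E i)).toReal / (μ (E i)).toReal) l (𝓝 (1 / d)) := by
  subst hμ
  set s := fun i => (volume (E i)).toReal
  have hEfin : ∀ i, volume (E i) ≠ ∞ := fun i =>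
    ((measure_mono (hEsub i)).trans_lt measure_Icc_lt_top).ne
  have hs : Tendsto s l (𝓝 0) := (ENNReal.tendsto_toReal ENNReal.zero_ne_top).comp hEsmall
  have hs0 : ∀ i, 0 < s i := fun i => ENNReal.toReal_pos (hEpos i).ne' (hEfin i)
  have hvolA := tendsto_volume_inter_preimage_div hc.1 hρ hd0 hT0 hd hgrowth hs hs0 hE
  set A := fun i => Ioo 0 c ∩ T ⁻¹' E i
  have hAfin : ∀ i, volume (A i) ≠ ∞ := fun i =>
    ((measure_mono inter_subset_left).trans_lt measure_Ioo_lt_top).ne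
  have hApos : ∀ᶠ i in l, 0 < volume (A i) :=
    (hvolA.eventually (lt_mem_nhds (one_div_pos.2 hd0))).mono fun i hi =>
      (ENNReal.toReal_pos_iff.1 ((div_pos_iff_of_pos_right (hs0 i)).1 hi)).1
  have hAsub : ∀ i, A i ⊆ Icc 0 (s i / ρ) := fun i x hx =>
    ⟨hx.1.1.le, (le_div_iff₀' hρ).2 ((hgrowth x hx.1).trans ((hE i).2 hx.2).2)⟩
  have hμA := tendsto_withDensity_toReal_div hh hh0.le
    (fun i => measurableSet_Ioo.inter (hTm (hEm i)))
    ((tendsto_const_nhds.Icc (by simpa using hs.div_const ρ)).smallSets_mono (.of_forall hAsub))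
    (fun i => inter_subset_left.trans (Ioo_subset_Icc_self.trans (Icc_subset_Icc_right hc.2)))
    hApos (.of_forall hAfin)
  have hμE := tendsto_withDensity_toReal_div hh hh0.le hEm
    ((tendsto_const_nhds.Icc hs).smallSets_mono (.of_forall fun i => (hE i).2)) hEsub
    (.of_forall hEpos) (.of_forall hEfin)
  have hlim := (hμA.mul hvolA).div hμE hh0.ne'
  rw [mul_div_cancel_left₀ _ hh0.ne'] at hlim
  refine hlim.congr' (hApos.mono fun i hi => ?_)
  simp only [Pi.div_apply]
  rw [div_mul_div_cancel₀ (ENNReal.toReal_pos hi.ne' (hAfin i)).ne',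
    div_div_div_cancel_right₀ (hs0 i).ne']

end Preimage

theorem stmt11_general {c : ℝ} (hc : c ∈ Set.Ioo (0 : ℝ) 1) {T : ℝ → ℝ}
    (hFolk : IsFolklore 0 1 T ({Set.Ioo 0 c, Set.Ioo c 1} : Set (Set ℝ)))
    (hmono₁ : StrictMonoOn T (Set.Ioo 0 c))
    (hT0 : T 0 = 0)
    (d : ℝ) (hd : HasDerivWithinAt T d (Set.Ici 0) 0)
    (μ : Measure ℝ) [IsProbabilityMeasure μ] (hac : μ ≪ volume)
    (hsupp : μ (Set.Icc (0:ℝ) 1)ᶜ = 0) (hinv : MeasurePreserving T μ μ)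
    (h : ℝ → ℝ) (hhcont : ContinuousOn h (Set.Icc 0 1))
    (hhpos : ∀ x ∈ Set.Icc (0:ℝ) 1, 0 < h x)
    (hdens : μ = (volume.restrict (Set.Icc (0:ℝ) 1)).withDensity
      (fun x => ENNReal.ofReal (h x)))
    (E : ℕ → Set ℝ) (hEm : ∀ k, MeasurableSet (E k)) (hEi : ∀ k, (E k).OrdConnected)
    (hE0 : ∀ k, (0 : ℝ) ∈ E k) (hEsub : ∀ k, E k ⊆ Set.Icc 0 1)
    (hEpos : ∀ k, 0 < volume (E k))
    (hEsmall : Tendsto (fun k => volume (E k)) atTop (𝓝 0)) :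
    Tendsto (fun k =>
        (μ (Set.Ioo 0 c ∩ T ⁻¹' (E k))).toReal / (μ (E k)).toReal)
      atTop (𝓝 (1 / d)) ∧
    Tendsto (fun k =>
        (μ (Set.Ioo c 1 ∩ T ⁻¹' (E k))).toReal / (μ (E k)).toReal)
      atTop (𝓝 (1 - 1 / d)) := by
  obtain ⟨ρ, hρ, hexp⟩ := hFolk.expanding
  have hbranch : Ioo 0 c ∈ ({Ioo 0 c, Ioo c 1} : Set (Set ℝ)) := Or.inl rfl
  have hgrowth : ∀ x ∈ Ioo 0 c, ρ * x ≤ T x := fun x hx => by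
    simpa [hT0] using mul_sub_le_sub_of_le_abs_deriv hd.continuousWithinAt
      ((hFolk.smooth _ hbranch).differentiableOn two_ne_zero) hmono₁.monotoneOn
      (hexp _ hbranch) hx
  have hd0 : 0 < d := by linarith [hd.le_of_mul_sub_le hc.1 (by simpa [hT0] using hgrowth)]
  have hE : ∀ k, Ico 0 (volume (E k)).toReal ⊆ E k ∧ E k ⊆ Icc 0 (volume (E k)).toReal :=
    fun k => by
      simpa using (hEi k).Ico_subset_and_subset_Icc_volume (hE0 k)
        (fun x hx => (hEsub k hx).1) (bddAbove_Icc.mono (hEsub k))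
  have hfirst := tendsto_measure_inter_preimage_div_measure hdens
    (hhcont 0 ⟨le_rfl, zero_le_one⟩) (hhpos 0 ⟨le_rfl, zero_le_one⟩) ⟨hc.1, hc.2.le⟩
    (by linarith) hd0 hT0 hd hgrowth hinv.measurable hEm hEsub hE hEpos hEsmall
  refine ⟨hfirst, (tendsto_const_nhds.sub hfirst).congr fun k => ?_⟩
  have hμE : 0 < μ (E k) := by
    rw [hdens]
    exact withDensity_restrict_pos (hhcont.aemeasurable measurableSet_Icc).ennreal_ofReal
      measurableSet_Icc (hEsub k) (fun x hx => hhpos x (hEsub k hx)) (hEpos k)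
  have hsplit := measure_inter_Ioo_add_measure_inter_Ioo hac hc hsupp (hinv.measurable (hEm k))
  rw [hinv.measure_preimage (hEm k).nullMeasurableSet] at hsplit
  rw [eq_div_iff (ENNReal.toReal_pos hμE.ne' (measure_ne_top _ _)).ne', sub_mul, one_mul,
    div_mul_cancel₀ _ (ENNReal.toReal_pos hμE.ne' (measure_ne_top _ _)).ne', ← hsplit,
    ENNReal.toReal_add (measure_ne_top _ _) (measure_ne_top _ _), add_sub_cancel_left]

/-- **The measure of the preimage pieces at a hyperbolic fixed point.**
In the setting of a simple two-branch Folklore map on `[0,1]` with fixed point `0`,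
right derivative `d = T'(0⁺)` and invariant probability `μ` with continuous density
`h`, for intervals `E_k ∋ 0` with `λ(E_k) → 0` one has
`μ((0,c) ∩ T⁻¹E_k) ∼ μ(E_k)/d` and hence `μ(E'_k) ∼ θ·μ(E_k)` with
`E'_k = (c,1) ∩ T⁻¹E_k` and `θ = 1 − 1/d`. -/
theorem stmt11 {c : ℝ} (hc : c ∈ Set.Ioo (0 : ℝ) 1) {T : ℝ → ℝ}
    (hFolk : IsFolklore 0 1 T ({Set.Ioo 0 c, Set.Ioo c 1} : Set (Set ℝ)))
    (hmono₁ : StrictMonoOn T (Set.Ioo 0 c)) (hmono₂ : StrictMonoOn T (Set.Ioo c 1))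
    (hT0 : T 0 = 0) (hTcont : ContinuousWithinAt T (Set.Ico 0 c) 0)
    (d : ℝ) (hd : HasDerivWithinAt T d (Set.Ici 0) 0)
    (μ : Measure ℝ) [IsProbabilityMeasure μ] (hac : μ ≪ volume)
    (hsupp : μ (Set.Icc (0:ℝ) 1)ᶜ = 0) (hinv : MeasurePreserving T μ μ)
    (h : ℝ → ℝ) (hhcont : ContinuousOn h (Set.Icc 0 1))
    (hhpos : ∀ x ∈ Set.Icc (0:ℝ) 1, 0 < h x)
    (hdens : μ = (volume.restrict (Set.Icc (0:ℝ) 1)).withDensity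
      (fun x => ENNReal.ofReal (h x)))
    (E : ℕ → Set ℝ) (hEm : ∀ k, MeasurableSet (E k)) (hEi : ∀ k, (E k).OrdConnected)
    (hE0 : ∀ k, (0 : ℝ) ∈ E k) (hEsub : ∀ k, E k ⊆ Set.Icc 0 1)
    (hEpos : ∀ k, 0 < volume (E k))
    (hEsmall : Tendsto (fun k => volume (E k)) atTop (𝓝 0)) :
    Tendsto (fun k =>
        (μ (Set.Ioo 0 c ∩ T ⁻¹' (E k))).toReal / (μ (E k)).toReal)
      atTop (𝓝 (1 / d)) ∧
    Tendsto (fun k =>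
        (μ (Set.Ioo c 1 ∩ T ⁻¹' (E k))).toReal / (μ (E k)).toReal)
      atTop (𝓝 (1 - 1 / d)) :=
  stmt11_general hc hFolk hmono₁ hT0 d hd μ hac hsupp hinv h hhcont hhpos hdens E hEm hEi hE0 hEsub
    hEpos hEsmall
end

section
/- Let X = [0,1], ξ = {(0,c),(c,1)} for some c ∈ (0,1), and let T:X→X be piecewise increasing, mapping each Z ∈ ξ homeomorphically onto (0,1). Assume T restricted to (c,1) admits a uniformly expanding C² extension to [c,1], while T restricted to (0,c) extends to a C² map on (0,c] and is expanding except for an indifferent fixed point at x* = 0: for every ε > 0 there is ρ(ε) > 1 with T' ≥ ρ(ε) on [ε,c], while T0 = 0, lim_{x↓0} T'x = 1, and T' is increasing on some interval (0,δ). Let μ ≪ λ be the unique T-invariant probability measure with continuous density version h on (0,1]. Let (E_k)_{k≥1} be intervals containing x* with λ(E_k) → 0, set Y := (c,1) and E'_k := Y ∩ T^{-1}E_k. Then μ(E'_k) ∼ (h(c)/T'(c^+)) · λ(E_k) as k → ∞, where T'(c^+) is the right derivative of T at c; moreover μ(E'_k) = o(μ(E_k)) as k → ∞. -/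
open MeasureTheory Filter Set Topology
open scoped ENNReal

/-!
Write `u`, `w` for the inverse branches of `T` on `(0,c)` and `(c,1)`, and `g = max h 0` for the
actual density of `μ`. Since `w s → c` with `(w s - c) / s → 1 / T'(c⁺)`, continuity of `g` at `c`
gives `μ(c, w s) ∼ (h c / T'(c⁺)) s`; for an interval `E ∋ 0` with `sup E = s` we have `λ(E) = s`
and `(c,1) ∩ T⁻¹E` is `(c, w s)` up to a point, which is the first claim. For the second,
invariance gives `μ(0,s) ≥ ∑_{j<N} μ(c, w (u^j s))`, and `u^j s ∼ s` because `T'(0⁺) = 1`, so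
`μ(0,s)/s → ∞`.

Both need `h c > 0`. Differentiating `μ(a,y) ≤ μ(T a, T y)` at `y` gives `g y ≤ T'(y) g(T y)`,
so `h c ≤ 0` would force `h ≤ 0` on the backward orbit of `c`. That orbit is dense: an interval
whose iterates never contain `c` stays inside one branch at each step and is expanded, which
cannot go on forever in `(0,1)`.
-/

open Function (invFunOn)

section Branch

variable {T : ℝ → ℝ} {a b A B : ℝ}

theorem invFunOn_mem_of_image_eq (himg : T '' Ioo a b = Ioo A B) {s : ℝ} (hs : s ∈ Ioo A B) :
    invFunOn T (Ioo a b) s ∈ Ioo a b ∧ T (invFunOn T (Ioo a b) s) = s :=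
  Function.invFunOn_pos (show s ∈ T '' Ioo a b from himg ▸ hs)

theorem lt_invFunOn_iff (hmono : StrictMonoOn T (Ioo a b)) (himg : T '' Ioo a b = Ioo A B)
    {x s : ℝ} (hx : x ∈ Ioo a b) (hs : s ∈ Ioo A B) :
    x < invFunOn T (Ioo a b) s ↔ T x < s := by
  obtain ⟨hmem, happ⟩ := invFunOn_mem_of_image_eq himg hs
  conv_rhs => rw [← happ]
  exact (hmono.lt_iff_lt hx hmem).symm

theorem lt_of_image_Ioo_eq (hab : a < b) (himg : T '' Ioo a b = Ioo A B) : A < B :=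
  nonempty_Ioo.1 (himg ▸ (nonempty_Ioo.2 hab).image T)

theorem tendsto_nhdsGT_of_image_Ioo_eq (hab : a < b) (hmono : StrictMonoOn T (Ioo a b))
    (himg : T '' Ioo a b = Ioo A B) : Tendsto T (𝓝[>] a) (𝓝 A) := by
  have := hmono.monotoneOn.tendsto_nhdsWithin_Ioo_right (nonempty_Ioo.2 hab)
    (himg ▸ bddBelow_Ioo)
  rwa [himg, csInf_Ioo (lt_of_image_Ioo_eq hab himg)] at this

theorem tendsto_invFunOn_nhdsGT (hab : a < b) (hmono : StrictMonoOn T (Ioo a b))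
    (himg : T '' Ioo a b = Ioo A B) :
    Tendsto (invFunOn T (Ioo a b)) (𝓝[>] A) (𝓝[>] a) := by
  have hAB := lt_of_image_Ioo_eq hab himg
  have hmem : ∀ᶠ s in 𝓝[>] A, invFunOn T (Ioo a b) s ∈ Ioo a b := by
    filter_upwards [Ioo_mem_nhdsGT hAB] with s hs using (invFunOn_mem_of_image_eq himg hs).1
  refine tendsto_nhdsWithin_iff.2 ⟨tendsto_order.2 ⟨fun a' ha' => ?_, fun b' hb' => ?_⟩, ?_⟩
  · filter_upwards [hmem] with s hs using ha'.trans hs.1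
  · set x := min b' ((a + b) / 2)
    have hx : x ∈ Ioo a b := ⟨lt_min hb' (by linarith), (min_le_right _ _).trans_lt (by linarith)⟩
    have hTx : T x ∈ Ioo A B := himg ▸ mem_image_of_mem T hx
    filter_upwards [Ioo_mem_nhdsGT hTx.1] with s hs
    have hs' : s ∈ Ioo A B := ⟨hs.1, hs.2.trans hTx.2⟩
    obtain ⟨hmem', happ⟩ := invFunOn_mem_of_image_eq himg hs'
    exact ((hmono.lt_iff_lt hmem' hx).1 (by rw [happ]; exact hs.2)).trans_le (min_le_left _ _)
  · filter_upwards [hmem] with s hs using hs.1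

end Branch

theorem mul_sub_le_sub_of_le_deriv {f : ℝ → ℝ} {a b ρ : ℝ} (hf : DifferentiableOn ℝ f (Ioo a b))
    (hρ : ∀ x ∈ Ioo a b, ρ ≤ deriv f x) {x y : ℝ} (hx : x ∈ Ioo a b) (hy : y ∈ Ioo a b)
    (hxy : x ≤ y) : ρ * (y - x) ≤ f y - f x :=
  (convex_Ioo a b).mul_sub_le_image_sub_of_le_deriv hf.continuousOn (by rwa [interior_Ioo])
    (by rwa [interior_Ioo]) x hx y hy hxy

theorem hasDerivAt_derivWithin_of_eqOn {f g : ℝ → ℝ} {s U : Set ℝ} (hU : IsOpen U) (hUs : U ⊆ s)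
    (hfg : EqOn g f U) (hg : DifferentiableOn ℝ g s) {x : ℝ} (hx : x ∈ U) :
    HasDerivAt f (derivWithin g s x) x :=
  ((hg x (hUs hx)).hasDerivWithinAt.hasDerivAt (mem_of_superset (hU.mem_nhds hx) hUs))
    |>.congr_of_eventuallyEq (eventually_of_mem (hU.mem_nhds hx) fun _ hy => (hfg hy).symm)

theorem tendsto_div_sub_of_hasDerivWithinAt {f g : ℝ → ℝ} {a b D : ℝ} (hab : a < b)
    (hg : HasDerivWithinAt g D (Icc a b) a) (hfg : EqOn g f (Ioo a b))
    (hf : Tendsto f (𝓝[>] a) (𝓝 0)) : Tendsto (fun x => f x / (x - a)) (𝓝[>] a) (𝓝 D) := by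
  have hIoi : HasDerivWithinAt g D (Ioi a) a :=
    hasDerivWithinAt_Ioi_iff_Ici.2 (hg.mono_of_mem_nhdsWithin (Icc_mem_nhdsGE hab))
  have hfg' : g =ᶠ[𝓝[>] a] f := eventually_of_mem (Ioo_mem_nhdsGT hab) hfg
  have hga : g a = 0 := tendsto_nhds_unique hIoi.continuousWithinAt (hf.congr' hfg'.symm)
  refine ((hasDerivWithinAt_iff_tendsto_slope' (lt_irrefl a)).1 hIoi).congr' ?_
  filter_upwards [hfg'] with x hx
  rw [slope_def_field, hga, sub_zero, hx]

theorem exists_lt_of_frequently_mul_le {ℓ : ℕ → ℝ} {ρ : ℝ} (hρ : 1 < ρ) (hℓ : Monotone ℓ)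
    (h0 : 0 < ℓ 0) (hfreq : ∃ᶠ n in atTop, ρ * ℓ n ≤ ℓ (n + 1)) (C : ℝ) : ∃ n, C < ℓ n := by
  have hpow : ∀ m : ℕ, ∃ n, ρ ^ m * ℓ 0 ≤ ℓ n := by
    intro m
    induction m with
    | zero => exact ⟨0, by simp⟩
    | succ m ih =>
      obtain ⟨n, hn⟩ := ih
      obtain ⟨n', hnn', hgrow⟩ := frequently_atTop.1 hfreq n
      refine ⟨n' + 1, ?_⟩
      calc ρ ^ (m + 1) * ℓ 0 = ρ * (ρ ^ m * ℓ 0) := by ring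
        _ ≤ ρ * ℓ n' := by gcongr; exact hn.trans (hℓ hnn')
        _ ≤ ℓ (n' + 1) := hgrow
  obtain ⟨m, hm⟩ := pow_unbounded_of_one_lt (C / ℓ 0) hρ
  obtain ⟨n, hn⟩ := hpow m
  exact ⟨n, ((div_lt_iff₀ h0).1 hm).trans_le hn⟩

theorem Ioo_zero_sSup_subset {E : Set ℝ} (hE : E.OrdConnected) (h0 : 0 ∈ E) :
    Ioo 0 (sSup E) ⊆ E := fun _ ht =>
  let ⟨_, he, hte⟩ := exists_lt_of_lt_csSup ⟨0, h0⟩ ht.2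
  hE.out h0 he ⟨ht.1.le, hte.le⟩

theorem subset_Icc_zero_sSup {E : Set ℝ} (hbdd : BddAbove E) (hE : E ⊆ Ici 0) :
    E ⊆ Icc 0 (sSup E) := fun _ hx => ⟨hE hx, le_csSup hbdd hx⟩

theorem volume_eq_ofReal_sSup {E : Set ℝ} (hE : E.OrdConnected) (h0 : 0 ∈ E)
    (hsub : E ⊆ Icc 0 1) : volume E = ENNReal.ofReal (sSup E) := by
  have hIcc := subset_Icc_zero_sSup (bddAbove_Icc.mono hsub) (hsub.trans Icc_subset_Ici_self)
  refine le_antisymm ((measure_mono hIcc).trans_eq ?_)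
    ((measure_mono (Ioo_zero_sSup_subset hE h0)).trans_eq' ?_)
  · rw [Real.volume_Icc, sub_zero]
  · rw [Real.volume_Ioo, sub_zero]

theorem tendsto_sSup_nhdsGT_zero {ι : Type*} {l : Filter ι} {E : ι → Set ℝ}
    (hE : ∀ i, (E i).OrdConnected) (h0 : ∀ i, 0 ∈ E i) (hsub : ∀ i, E i ⊆ Icc 0 1)
    (hpos : ∀ i, 0 < volume (E i)) (hsmall : Tendsto (fun i => volume (E i)) l (𝓝 0)) :
    Tendsto (fun i => sSup (E i)) l (𝓝[>] 0) := by
  simp only [fun i => volume_eq_ofReal_sSup (hE i) (h0 i) (hsub i)] at hpos hsmall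
  refine tendsto_nhdsWithin_iff.2 ⟨?_, .of_forall fun i => ENNReal.ofReal_pos.1 (hpos i)⟩
  refine ((ENNReal.tendsto_toReal ENNReal.zero_ne_top).comp hsmall).congr fun i => ?_
  exact ENNReal.toReal_ofReal (le_csSup (bddAbove_Icc.mono (hsub i)) (h0 i))

section Density

variable {μ : Measure ℝ} {h : ℝ → ℝ}

theorem exists_pos_of_eq_withDensity [IsProbabilityMeasure μ]
    (hdens : μ = (volume.restrict (Icc 0 1)).withDensity fun x => ENNReal.ofReal (h x)) :
    ∃ x ∈ Ioo 0 1, 0 < h x := by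
  by_contra! hle
  have : μ univ = 0 := by
    rw [hdens, withDensity_apply _ MeasurableSet.univ, Measure.restrict_univ,
      setLIntegral_congr Ioo_ae_eq_Icc.symm,
      setLIntegral_congr_fun measurableSet_Ioo fun x hx => ENNReal.ofReal_eq_zero.2 (hle x hx),
      lintegral_zero]
  simp at this

theorem measure_Ioo_toReal_eq_integral
    (hdens : μ = (volume.restrict (Icc 0 1)).withDensity fun x => ENNReal.ofReal (h x))
    (hh : ContinuousOn h (Ioc 0 1)) {a b : ℝ} (ha : 0 < a) (hab : a ≤ b) (hb : b ≤ 1) :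
    (μ (Ioo a b)).toReal = ∫ x in a..b, max (h x) 0 := by
  have hsub : Ioo a b ⊆ Ioc 0 1 := fun x hx => ⟨ha.trans hx.1, hx.2.le.trans hb⟩
  have hg : ContinuousOn (fun x => max (h x) 0) (Ioo a b) := (hh.mono hsub).sup continuousOn_const
  rw [intervalIntegral.integral_of_le hab, integral_Ioc_eq_integral_Ioo,
    integral_eq_lintegral_of_nonneg_ae (f := fun x => max (h x) 0)
      (ae_of_all _ fun x => le_max_right _ _) (hg.aestronglyMeasurable measurableSet_Ioo),
    hdens, withDensity_apply _ measurableSet_Ioo, Measure.restrict_restrict measurableSet_Ioo,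
    inter_eq_self_of_subset_left (hsub.trans Ioc_subset_Icc_self)]
  simp

theorem hasDerivAt_integral_max_zero (hh : ContinuousOn h (Ioc 0 1)) {y : ℝ} (hy : y ∈ Ioo 0 1) :
    HasDerivAt (fun x => ∫ t in y..x, max (h t) 0) (max (h y) 0) y := by
  have hg : ContinuousOn (fun x => max (h x) 0) (Ioo 0 1) :=
    (hh.mono Ioo_subset_Ioc_self).sup continuousOn_const
  exact intervalIntegral.integral_hasDerivAt_right IntervalIntegrable.refl
    (hg.stronglyMeasurableAtFilter isOpen_Ioo y hy) (hg.continuousAt (Ioo_mem_nhds hy.1 hy.2))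

theorem tendsto_measure_Ioo_div_nhdsLT
    (hdens : μ = (volume.restrict (Icc 0 1)).withDensity fun x => ENNReal.ofReal (h x))
    (hh : ContinuousOn h (Ioc 0 1)) {y : ℝ} (hy : y ∈ Ioo 0 1) :
    Tendsto (fun a => (μ (Ioo a y)).toReal / (y - a)) (𝓝[<] y) (𝓝 (max (h y) 0)) := by
  refine ((hasDerivAt_iff_tendsto_slope.1 (hasDerivAt_integral_max_zero hh hy)).mono_left
    (nhdsLT_le_nhdsNE y)).congr' ?_
  filter_upwards [Ioo_mem_nhdsLT hy.1] with a ha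
  rw [slope_def_field, intervalIntegral.integral_same, sub_zero, intervalIntegral.integral_symm,
    measure_Ioo_toReal_eq_integral hdens hh ha.1 ha.2.le hy.2.le, ← neg_sub y a, neg_div_neg_eq]

theorem tendsto_measure_Ioo_div_nhdsGT
    (hdens : μ = (volume.restrict (Icc 0 1)).withDensity fun x => ENNReal.ofReal (h x))
    (hh : ContinuousOn h (Ioc 0 1)) {y : ℝ} (hy : y ∈ Ioo 0 1) :
    Tendsto (fun b => (μ (Ioo y b)).toReal / (b - y)) (𝓝[>] y) (𝓝 (max (h y) 0)) := by
  refine ((hasDerivAt_iff_tendsto_slope.1 (hasDerivAt_integral_max_zero hh hy)).mono_left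
    (nhdsGT_le_nhdsNE y)).congr' ?_
  filter_upwards [Ioo_mem_nhdsGT hy.2] with b hb
  rw [slope_def_field, intervalIntegral.integral_same, sub_zero,
    measure_Ioo_toReal_eq_integral hdens hh hy.1 hb.1.le hb.2.le]

theorem max_zero_le_mul_of_measure_Ioo_le [IsFiniteMeasure μ]
    (hdens : μ = (volume.restrict (Icc 0 1)).withDensity fun x => ENNReal.ofReal (h x))
    (hh : ContinuousOn h (Ioc 0 1)) {T : ℝ → ℝ} {y d : ℝ} (hy : y ∈ Ioo 0 1)
    (hTy : T y ∈ Ioo 0 1) (hT : HasDerivAt T d y)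
    (hloc : ∀ᶠ a in 𝓝[<] y, T a < T y ∧ μ (Ioo a y) ≤ μ (Ioo (T a) (T y))) :
    max (h y) 0 ≤ max (h (T y)) 0 * d := by
  have hTa : Tendsto T (𝓝[<] y) (𝓝[<] (T y)) := tendsto_nhdsWithin_iff.2
    ⟨hT.continuousAt.tendsto.mono_left nhdsWithin_le_nhds, hloc.mono fun _ ha => ha.1⟩
  have hslope : Tendsto (fun a => (T y - T a) / (y - a)) (𝓝[<] y) (𝓝 d) := by
    refine ((hasDerivAt_iff_tendsto_slope.1 hT).mono_left (nhdsLT_le_nhdsNE y)).congr fun a => ?_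
    rw [slope_def_field, ← neg_sub (T y), ← neg_sub y, neg_div_neg_eq]
  refine le_of_tendsto_of_tendsto (tendsto_measure_Ioo_div_nhdsLT hdens hh hy)
    (((tendsto_measure_Ioo_div_nhdsLT hdens hh hTy).comp hTa).mul hslope) ?_
  filter_upwards [hloc, self_mem_nhdsWithin] with a ⟨hTa, hμ⟩ (hay : a < y)
  rw [Function.comp_apply, div_mul_div_cancel₀ (sub_ne_zero.2 hTa.ne')]
  exact div_le_div_of_nonneg_right (ENNReal.toReal_mono (measure_ne_top _ _) hμ)
    (sub_nonneg.2 hay.le)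

theorem nonpos_of_nonpos_apply_of_strictMonoOn [IsFiniteMeasure μ]
    (hdens : μ = (volume.restrict (Icc 0 1)).withDensity fun x => ENNReal.ofReal (h x))
    (hh : ContinuousOn h (Ioc 0 1)) {T : ℝ → ℝ} (hinv : MeasurePreserving T μ μ) {l r : ℝ}
    (hlr : Ioo l r ⊆ Ioo 0 1) (hmono : StrictMonoOn T (Ioo l r))
    (hdiff : DifferentiableOn ℝ T (Ioo l r)) (hmaps : MapsTo T (Ioo l r) (Ioo 0 1)) {y : ℝ}
    (hy : y ∈ Ioo l r) (hTy : h (T y) ≤ 0) : h y ≤ 0 := by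
  have hloc : ∀ᶠ a in 𝓝[<] y, T a < T y ∧ μ (Ioo a y) ≤ μ (Ioo (T a) (T y)) := by
    filter_upwards [Ioo_mem_nhdsLT hy.1] with a ha
    have ha' : a ∈ Ioo l r := ⟨ha.1, ha.2.trans hy.2⟩
    refine ⟨hmono ha' hy ha.2, ?_⟩
    calc μ (Ioo a y) ≤ μ (T ⁻¹' Ioo (T a) (T y)) := measure_mono fun x hx =>
          have hx' : x ∈ Ioo l r := ⟨ha.1.trans hx.1, hx.2.trans hy.2⟩
          ⟨hmono ha' hx' hx.1, hmono hx' hy hx.2⟩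
      _ = μ (Ioo (T a) (T y)) := hinv.measure_preimage measurableSet_Ioo.nullMeasurableSet
  have := max_zero_le_mul_of_measure_Ioo_le hdens hh (hlr hy) (hmaps hy)
    (hdiff.differentiableAt (Ioo_mem_nhds hy.1 hy.2)).hasDerivAt hloc
  rw [max_eq_right hTy, zero_mul] at this
  exact (le_max_left _ _).trans this

end Density

structure IntermittentMap (c : ℝ) (T : ℝ → ℝ) : Prop where
  pos : 0 < c
  lt_one : c < 1
  strictMonoOn_left : StrictMonoOn T (Ioo 0 c)
  strictMonoOn_right : StrictMonoOn T (Ioo c 1)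
  image_left : T '' Ioo 0 c = Ioo 0 1
  image_right : T '' Ioo c 1 = Ioo 0 1
  differentiableOn_left : DifferentiableOn ℝ T (Ioo 0 c)
  differentiableOn_right : DifferentiableOn ℝ T (Ioo c 1)
  expanding_left : ∀ a ∈ Ioo 0 c, ∃ ρ > 1, ∀ x ∈ Ioo a c, ρ ≤ deriv T x
  expanding_right : ∃ ρ > 1, ∀ x ∈ Ioo c 1, ρ ≤ deriv T x
  tendsto_deriv_nhdsGT_zero : Tendsto (deriv T) (𝓝[>] 0) (𝓝 1)

namespace IntermittentMap

variable {c : ℝ} {T : ℝ → ℝ} {μ : Measure ℝ} {h : ℝ → ℝ}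

theorem of_extensions (hc : c ∈ Ioo 0 1) {T₁ T₂ : ℝ → ℝ}
    (hmono₁ : StrictMonoOn T (Ioo 0 c)) (hmono₂ : StrictMonoOn T (Ioo c 1))
    (himg₁ : T '' Ioo 0 c = Ioo 0 1) (himg₂ : T '' Ioo c 1 = Ioo 0 1)
    (h2ext : EqOn T₂ T (Ioo c 1)) (h2diff : DifferentiableOn ℝ T₂ (Icc c 1))
    (h2exp : ∃ ρ : ℝ, 1 < ρ ∧ ∀ x ∈ Icc c 1, ρ ≤ derivWithin T₂ (Icc c 1) x)
    (h1ext : EqOn T₁ T (Ioo 0 c)) (h1diff : DifferentiableOn ℝ T₁ (Ioc 0 c))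
    (h1exp : ∀ ε : ℝ, 0 < ε → ε ≤ c →
      ∃ ρ : ℝ, 1 < ρ ∧ ∀ x ∈ Icc ε c, ρ ≤ derivWithin T₁ (Ioc 0 c) x)
    (hneutral : Tendsto (derivWithin T₁ (Ioc 0 c)) (𝓝[>] 0) (𝓝 1)) :
    IntermittentMap c T := by
  have hd₁ : ∀ x ∈ Ioo 0 c, HasDerivAt T (derivWithin T₁ (Ioc 0 c) x) x := fun _ hx =>
    hasDerivAt_derivWithin_of_eqOn isOpen_Ioo Ioo_subset_Ioc_self h1ext h1diff hx
  have hd₂ : ∀ x ∈ Ioo c 1, HasDerivAt T (derivWithin T₂ (Icc c 1) x) x := fun _ hx =>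
    hasDerivAt_derivWithin_of_eqOn isOpen_Ioo Ioo_subset_Icc_self h2ext h2diff hx
  obtain ⟨ρ₂, hρ₂, hbound₂⟩ := h2exp
  refine ⟨hc.1, hc.2, hmono₁, hmono₂, himg₁, himg₂,
    fun x hx => (hd₁ x hx).differentiableAt.differentiableWithinAt,
    fun x hx => (hd₂ x hx).differentiableAt.differentiableWithinAt,
    fun a ha => ?_, ⟨ρ₂, hρ₂, fun x hx => (hd₂ x hx).deriv ▸ hbound₂ x (Ioo_subset_Icc_self hx)⟩,
    hneutral.congr' ?_⟩
  · obtain ⟨ρ, hρ, hbound⟩ := h1exp a ha.1 ha.2.le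
    exact ⟨ρ, hρ, fun x hx => (hd₁ x ⟨ha.1.trans hx.1, hx.2⟩).deriv ▸
      hbound x ⟨hx.1.le, hx.2.le⟩⟩
  · filter_upwards [Ioo_mem_nhdsGT hc.1] with x hx using (hd₁ x hx).deriv.symm

theorem mapsTo_left (H : IntermittentMap c T) : MapsTo T (Ioo 0 c) (Ioo 0 1) :=
  fun _ hx => H.image_left ▸ mem_image_of_mem T hx

theorem mapsTo_right (H : IntermittentMap c T) : MapsTo T (Ioo c 1) (Ioo 0 1) :=
  fun _ hx => H.image_right ▸ mem_image_of_mem T hx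

theorem continuousOn_monotoneOn_mapsTo_of_subset (H : IntermittentMap c T) {s : Set ℝ}
    (hs : s ⊆ Ioo 0 c ∨ s ⊆ Ioo c 1) :
    ContinuousOn T s ∧ MonotoneOn T s ∧ MapsTo T s (Ioo 0 1) := by
  rcases hs with hs | hs
  · exact ⟨H.differentiableOn_left.continuousOn.mono hs,
      H.strictMonoOn_left.monotoneOn.mono hs, H.mapsTo_left.mono_left hs⟩
  · exact ⟨H.differentiableOn_right.continuousOn.mono hs,
      H.strictMonoOn_right.monotoneOn.mono hs, H.mapsTo_right.mono_left hs⟩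

theorem exists_mul_sub_le_left (H : IntermittentMap c T) {a : ℝ} (ha : 0 < a) :
    ∃ ρ > 1, ∀ x y, a ≤ x → x ≤ y → Icc x y ⊆ Ioo 0 c → ρ * (y - x) ≤ T y - T x := by
  set a' := min (a / 2) (c / 2)
  have ha' : a' ∈ Ioo 0 c := ⟨lt_min (by linarith) (by linarith [H.pos]),
    (min_le_right _ _).trans_lt (by linarith [H.pos])⟩
  obtain ⟨ρ, hρ, hderiv⟩ := H.expanding_left a' ha'
  refine ⟨ρ, hρ, fun x y hax hxy hsub => ?_⟩
  have hlt : a' < x := (min_le_left _ _).trans_lt (by linarith)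
  exact mul_sub_le_sub_of_le_deriv (H.differentiableOn_left.mono (Ioo_subset_Ioo_left ha'.1.le))
    hderiv ⟨hlt, (hsub (left_mem_Icc.2 hxy)).2⟩ ⟨hlt.trans_le hxy, (hsub (right_mem_Icc.2 hxy)).2⟩
    hxy

theorem exists_mul_sub_le_right (H : IntermittentMap c T) : ∃ ρ > 1, ∀ x y, x ≤ y →
    Icc x y ⊆ Ioo c 1 → ρ * (y - x) ≤ T y - T x := by
  obtain ⟨ρ, hρ, hderiv⟩ := H.expanding_right
  exact ⟨ρ, hρ, fun x y hxy hsub => mul_sub_le_sub_of_le_deriv H.differentiableOn_right hderiv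
    (hsub (left_mem_Icc.2 hxy)) (hsub (right_mem_Icc.2 hxy)) hxy⟩

theorem tendsto_nhdsGT_zero (H : IntermittentMap c T) : Tendsto T (𝓝[>] 0) (𝓝 0) :=
  tendsto_nhdsGT_of_image_Ioo_eq H.pos H.strictMonoOn_left H.image_left

theorem le_apply (H : IntermittentMap c T) {x : ℝ} (hx : x ∈ Ioo 0 c) : x ≤ T x := by
  have hlim : Tendsto (fun a => T a + (x - a)) (𝓝[>] 0) (𝓝 (0 + (x - 0))) :=
    H.tendsto_nhdsGT_zero.add (tendsto_const_nhds.sub (tendsto_id.mono_left nhdsWithin_le_nhds))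
  rw [zero_add, sub_zero] at hlim
  refine le_of_tendsto hlim ?_
  filter_upwards [Ioo_mem_nhdsGT hx.1] with a ha
  obtain ⟨ρ, hρ, hgrow⟩ := H.exists_mul_sub_le_left ha.1
  have := hgrow a x le_rfl ha.2.le fun z hz => ⟨ha.1.trans_le hz.1, hz.2.trans_lt hx.2⟩
  nlinarith [ha.2]

theorem apply_lt_apply_of_Icc_subset (H : IntermittentMap c T) {x y : ℝ} (hxy : x < y)
    (hs : Icc x y ⊆ Ioo 0 c ∨ Icc x y ⊆ Ioo c 1) : T x < T y := by
  rcases hs with hs | hs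
  · exact H.strictMonoOn_left (hs (left_mem_Icc.2 hxy.le)) (hs (right_mem_Icc.2 hxy.le)) hxy
  · exact H.strictMonoOn_right (hs (left_mem_Icc.2 hxy.le)) (hs (right_mem_Icc.2 hxy.le)) hxy

theorem sub_le_apply_sub_of_Icc_subset (H : IntermittentMap c T) {x y : ℝ} (hxy : x ≤ y)
    (hs : Icc x y ⊆ Ioo 0 c ∨ Icc x y ⊆ Ioo c 1) : y - x ≤ T y - T x := by
  rcases hs with hs | hs
  · obtain ⟨ρ, hρ, hgrow⟩ := H.exists_mul_sub_le_left (hs (left_mem_Icc.2 hxy)).1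
    nlinarith [hgrow x y le_rfl hxy hs]
  · obtain ⟨ρ, hρ, hgrow⟩ := H.exists_mul_sub_le_right
    nlinarith [hgrow x y hxy hs]

theorem not_forall_iterate_Icc_subset (H : IntermittentMap c T) {p q : ℝ} (hpq : p < q) :
    ¬ ∀ n, Icc (T^[n] p) (T^[n] q) ⊆ Ioo 0 c ∨ Icc (T^[n] p) (T^[n] q) ⊆ Ioo c 1 := by
  intro hside
  have hsucc : ∀ n x, T^[n + 1] x = T (T^[n] x) := fun n x => Function.iterate_succ_apply' T n x
  have hlt : ∀ n, T^[n] p < T^[n] q := by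
    intro n
    induction n with
    | zero => exact hpq
    | succ n ih => simpa only [hsucc] using H.apply_lt_apply_of_Icc_subset ih (hside n)
  have hmem : ∀ n, 0 < T^[n] p ∧ T^[n] q < 1 := fun n => by
    rcases hside n with h | h
    · exact ⟨(h (left_mem_Icc.2 (hlt n).le)).1, (h (right_mem_Icc.2 (hlt n).le)).2.trans H.lt_one⟩
    · exact ⟨H.pos.trans (h (left_mem_Icc.2 (hlt n).le)).1, (h (right_mem_Icc.2 (hlt n).le)).2⟩
  have hlen : Monotone fun n => T^[n] q - T^[n] p := monotone_nat_of_le_succ fun n => by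
    simpa only [hsucc] using H.sub_le_apply_sub_of_Icc_subset (hlt n).le (hside n)
  have hfreq : ∃ ρ > 1, ∃ᶠ n in atTop,
      ρ * (T^[n] q - T^[n] p) ≤ T^[n + 1] q - T^[n + 1] p := by
    by_cases hright : ∃ᶠ n in atTop, Icc (T^[n] p) (T^[n] q) ⊆ Ioo c 1
    · obtain ⟨ρ, hρ, hgrow⟩ := H.exists_mul_sub_le_right
      refine ⟨ρ, hρ, hright.mono fun n hn => ?_⟩
      simpa only [hsucc] using hgrow _ _ (hlt n).le hn
    · obtain ⟨N, hN⟩ := eventually_atTop.1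
        ((not_frequently.1 hright).mono fun n hn => (hside n).resolve_right hn)
      have hincr : ∀ n ≥ N, T^[N] p ≤ T^[n] p := by
        refine Nat.le_induction le_rfl fun n hn ih => ih.trans ?_
        rw [hsucc]
        exact H.le_apply (hN n hn (left_mem_Icc.2 (hlt n).le))
      obtain ⟨ρ, hρ, hgrow⟩ := H.exists_mul_sub_le_left (hmem N).1
      refine ⟨ρ, hρ, (eventually_atTop.2 ⟨N, fun n hn => ?_⟩).frequently⟩
      simpa only [hsucc] using hgrow _ _ (hincr n hn) (hlt n).le (hN n hn)
  obtain ⟨ρ, hρ, hfreq⟩ := hfreq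
  obtain ⟨n, hn⟩ := exists_lt_of_frequently_mul_le hρ hlen (sub_pos.2 hpq) hfreq 1
  linarith [hmem n]

theorem exists_mem_Icc_iterate_eq (H : IntermittentMap c T) {p q : ℝ} (hp : 0 < p)
    (hpq : p < q) (hq : q < 1) : ∃ z ∈ Icc p q, ∃ m, T^[m] z = c := by
  by_contra! hne
  have hside : ∀ n, ContinuousOn T^[n] (Icc p q) → MonotoneOn T^[n] (Icc p q) →
      MapsTo T^[n] (Icc p q) (Ioo 0 1) →
      Icc (T^[n] p) (T^[n] q) ⊆ Ioo 0 c ∨ Icc (T^[n] p) (T^[n] q) ⊆ Ioo c 1 := by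
    intro n hcont hmono hmaps
    have himage := hcont.image_Icc_of_monotoneOn hpq.le hmono
    have hsub : Icc (T^[n] p) (T^[n] q) ⊆ Ioo 0 1 := himage ▸ hmaps.image_subset
    have hc : c ∉ Icc (T^[n] p) (T^[n] q) := by
      rw [← himage]
      rintro ⟨z, hz, hzc⟩
      exact hne z hz n hzc
    rcases lt_or_ge c (T^[n] p) with hcp | hpc
    · exact Or.inr fun x hx => ⟨hcp.trans_le hx.1, (hsub hx).2⟩
    · have hqc : T^[n] q < c := not_le.1 fun hcq => hc ⟨hpc, hcq⟩
      exact Or.inl fun x hx => ⟨(hsub hx).1, hx.2.trans_lt hqc⟩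
  have hiter : ∀ n, ContinuousOn T^[n] (Icc p q) ∧ MonotoneOn T^[n] (Icc p q) ∧
      MapsTo T^[n] (Icc p q) (Ioo 0 1) := by
    intro n
    induction n with
    | zero =>
      exact ⟨continuousOn_id, monotoneOn_id, fun x hx => ⟨hp.trans_le hx.1, hx.2.trans_lt hq⟩⟩
    | succ n ih =>
      obtain ⟨hcont, hmono, hmaps⟩ := ih
      obtain ⟨hTcont, hTmono, hTmaps⟩ :=
        H.continuousOn_monotoneOn_mapsTo_of_subset (hside n hcont hmono hmaps)
      have hto : MapsTo T^[n] (Icc p q) (Icc (T^[n] p) (T^[n] q)) := hmono.mapsTo_Icc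
      rw [Function.iterate_succ']
      exact ⟨hTcont.comp hcont hto, hTmono.comp hmono hto, hTmaps.comp hto⟩
  exact H.not_forall_iterate_Icc_subset hpq fun n => hside n (hiter n).1 (hiter n).2.1 (hiter n).2.2

theorem nonpos_of_iterate_eq [IsFiniteMeasure μ] (H : IntermittentMap c T)
    (hdens : μ = (volume.restrict (Icc 0 1)).withDensity fun x => ENNReal.ofReal (h x))
    (hh : ContinuousOn h (Ioc 0 1)) (hinv : MeasurePreserving T μ μ) (hc : h c ≤ 0) (n : ℕ) :
    ∀ y ∈ Ioo 0 1, T^[n] y = c → h y ≤ 0 := by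
  induction n with
  | zero => rintro y - rfl; exact hc
  | succ n ih =>
    intro y hy hn
    rw [Function.iterate_succ_apply] at hn
    rcases lt_trichotomy y c with hyc | rfl | hcy
    · exact nonpos_of_nonpos_apply_of_strictMonoOn hdens hh hinv
        (Ioo_subset_Ioo_right H.lt_one.le) H.strictMonoOn_left H.differentiableOn_left
        H.mapsTo_left ⟨hy.1, hyc⟩ (ih _ (H.mapsTo_left ⟨hy.1, hyc⟩) hn)
    · exact hc
    · exact nonpos_of_nonpos_apply_of_strictMonoOn hdens hh hinv
        (Ioo_subset_Ioo_left H.pos.le) H.strictMonoOn_right H.differentiableOn_right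
        H.mapsTo_right ⟨hcy, hy.2⟩ (ih _ (H.mapsTo_right ⟨hcy, hy.2⟩) hn)

theorem density_pos [IsProbabilityMeasure μ] (H : IntermittentMap c T)
    (hdens : μ = (volume.restrict (Icc 0 1)).withDensity fun x => ENNReal.ofReal (h x))
    (hh : ContinuousOn h (Ioc 0 1)) (hinv : MeasurePreserving T μ μ) : 0 < h c := by
  by_contra! hc
  obtain ⟨x, hx, hhx⟩ := exists_pos_of_eq_withDensity hdens
  have hpos : ∀ᶠ y in 𝓝[≤] x, 0 < h y :=
    ((hh.continuousAt (Ioc_mem_nhds hx.1 hx.2)).eventually (lt_mem_nhds hhx)).filter_mono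
      nhdsWithin_le_nhds
  obtain ⟨p, hpx, hp⟩ := mem_nhdsLE_iff_exists_Icc_subset.1 (hpos.and (Ioc_mem_nhdsLE hx.1))
  obtain ⟨z, hz, m, hzm⟩ := H.exists_mem_Icc_iterate_eq (hp (left_mem_Icc.2 hpx.le)).2.1 hpx hx.2
  exact (hp hz).1.not_ge <| H.nonpos_of_iterate_eq hdens hh hinv hc m z
    ⟨(hp hz).2.1, (hp hz).2.2.trans_lt hx.2⟩ hzm

theorem tendsto_apply_div_self (H : IntermittentMap c T) :
    Tendsto (fun x => T x / x) (𝓝[>] 0) (𝓝 1) := by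
  refine deriv.lhopital_zero_right_on_Ioo H.pos H.differentiableOn_left (fun x _ => by simp)
    H.tendsto_nhdsGT_zero (tendsto_id.mono_left nhdsWithin_le_nhds) ?_
  simpa using H.tendsto_deriv_nhdsGT_zero

theorem tendsto_invFunOn_left_div_self (H : IntermittentMap c T) :
    Tendsto (fun s => invFunOn T (Ioo 0 c) s / s) (𝓝[>] 0) (𝓝 1) := by
  have := (H.tendsto_apply_div_self.comp
    (tendsto_invFunOn_nhdsGT H.pos H.strictMonoOn_left H.image_left)).inv₀ one_ne_zero
  rw [inv_one] at this
  refine this.congr' ?_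
  filter_upwards [Ioo_mem_nhdsGT zero_lt_one] with s hs
  simp [(invFunOn_mem_of_image_eq H.image_left hs).2]

theorem tendsto_iterate_invFunOn_left (H : IntermittentMap c T) (j : ℕ) :
    Tendsto (invFunOn T (Ioo 0 c))^[j] (𝓝[>] 0) (𝓝[>] 0) ∧
      Tendsto (fun s => (invFunOn T (Ioo 0 c))^[j] s / s) (𝓝[>] 0) (𝓝 1) := by
  have hu := tendsto_invFunOn_nhdsGT H.pos H.strictMonoOn_left H.image_left
  induction j with
  | zero =>
    refine ⟨tendsto_id, tendsto_const_nhds.congr' ?_⟩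
    filter_upwards [self_mem_nhdsWithin] with s (hs : 0 < s)
    simp [hs.ne']
  | succ j ih =>
    refine ⟨ih.1.comp hu, ?_⟩
    have := (ih.2.comp hu).mul H.tendsto_invFunOn_left_div_self
    rw [mul_one] at this
    refine this.congr' ?_
    filter_upwards [hu.eventually self_mem_nhdsWithin] with s (hs : 0 < _)
    rw [Function.comp_apply, div_mul_div_cancel₀ hs.ne', Function.iterate_succ_apply]

theorem measure_Ioo_add_measure_Ioo_le (H : IntermittentMap c T) (hinv : MeasurePreserving T μ μ)
    {s : ℝ} (hs : s ∈ Ioo 0 1) :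
    μ (Ioo 0 (invFunOn T (Ioo 0 c) s)) + μ (Ioo c (invFunOn T (Ioo c 1) s)) ≤ μ (Ioo 0 s) := by
  obtain ⟨hu, -⟩ := invFunOn_mem_of_image_eq H.image_left hs
  obtain ⟨hw, -⟩ := invFunOn_mem_of_image_eq H.image_right hs
  have hdisj : Disjoint (Ioo 0 (invFunOn T (Ioo 0 c) s)) (Ioo c (invFunOn T (Ioo c 1) s)) :=
    Ioo_disjoint_Ioo.2 ((min_le_left _ _).trans (hu.2.le.trans (le_max_right _ _)))
  have hsub : Ioo 0 (invFunOn T (Ioo 0 c) s) ∪ Ioo c (invFunOn T (Ioo c 1) s) ⊆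
      T ⁻¹' Ioo 0 s := by
    rintro x (hx | hx)
    · have hx' : x ∈ Ioo 0 c := ⟨hx.1, hx.2.trans hu.2⟩
      exact ⟨(H.mapsTo_left hx').1,
        (lt_invFunOn_iff H.strictMonoOn_left H.image_left hx' hs).1 hx.2⟩
    · have hx' : x ∈ Ioo c 1 := ⟨hx.1, hx.2.trans hw.2⟩
      exact ⟨(H.mapsTo_right hx').1,
        (lt_invFunOn_iff H.strictMonoOn_right H.image_right hx' hs).1 hx.2⟩
  calc _ = μ (Ioo 0 (invFunOn T (Ioo 0 c) s) ∪ Ioo c (invFunOn T (Ioo c 1) s)) :=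
        (measure_union hdisj measurableSet_Ioo).symm
    _ ≤ μ (T ⁻¹' Ioo 0 s) := measure_mono hsub
    _ = μ (Ioo 0 s) := hinv.measure_preimage measurableSet_Ioo.nullMeasurableSet

theorem sum_measure_Ioo_le (H : IntermittentMap c T) (hinv : MeasurePreserving T μ μ)
    (N : ℕ) : ∀ s ∈ Ioo 0 1, ∑ j ∈ Finset.range N,
      μ (Ioo c (invFunOn T (Ioo c 1) ((invFunOn T (Ioo 0 c))^[j] s))) ≤ μ (Ioo 0 s) := by
  induction N with
  | zero => simp
  | succ N ih =>
    intro s hs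
    obtain ⟨hu, -⟩ := invFunOn_mem_of_image_eq H.image_left hs
    rw [Finset.sum_range_succ']
    simp only [Function.iterate_succ_apply, Function.iterate_zero_apply]
    calc _ ≤ μ (Ioo 0 (invFunOn T (Ioo 0 c) s)) + μ (Ioo c (invFunOn T (Ioo c 1) s)) :=
          add_le_add_left (ih _ ⟨hu.1, hu.2.trans H.lt_one⟩) _
      _ ≤ μ (Ioo 0 s) := H.measure_Ioo_add_measure_Ioo_le hinv hs

theorem tendsto_measure_Ioo_invFunOn_right_div (H : IntermittentMap c T)
    (hdens : μ = (volume.restrict (Icc 0 1)).withDensity fun x => ENNReal.ofReal (h x))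
    (hh : ContinuousOn h (Ioc 0 1)) {D : ℝ}
    (hD : Tendsto (fun x => T x / (x - c)) (𝓝[>] c) (𝓝 D)) (hD0 : D ≠ 0) :
    Tendsto (fun s => (μ (Ioo c (invFunOn T (Ioo c 1) s))).toReal / s) (𝓝[>] 0)
      (𝓝 (max (h c) 0 / D)) := by
  have hw := tendsto_invFunOn_nhdsGT H.lt_one H.strictMonoOn_right H.image_right
  have := ((tendsto_measure_Ioo_div_nhdsGT hdens hh ⟨H.pos, H.lt_one⟩).comp hw).mul
    ((hD.comp hw).inv₀ hD0)
  rw [← div_eq_mul_inv] at this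
  refine this.congr' ?_
  filter_upwards [Ioo_mem_nhdsGT zero_lt_one] with s hs
  obtain ⟨hmem, happ⟩ := invFunOn_mem_of_image_eq H.image_right hs
  rw [Function.comp_apply, Function.comp_apply, happ, inv_div,
    div_mul_div_cancel₀ (sub_pos.2 hmem.1).ne']

theorem tendsto_measure_Ioo_zero_div_atTop [IsFiniteMeasure μ] (H : IntermittentMap c T)
    (hinv : MeasurePreserving T μ μ) {K : ℝ} (hK : 0 < K)
    (hratio : Tendsto (fun s => (μ (Ioo c (invFunOn T (Ioo c 1) s))).toReal / s) (𝓝[>] 0)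
      (𝓝 K)) :
    Tendsto (fun s => (μ (Ioo 0 s)).toReal / s) (𝓝[>] 0) atTop := by
  refine tendsto_atTop.2 fun A => ?_
  obtain ⟨N, hN⟩ := exists_nat_gt (A / K)
  have hterm : ∀ j ∈ Finset.range N, Tendsto (fun s =>
      (μ (Ioo c (invFunOn T (Ioo c 1) ((invFunOn T (Ioo 0 c))^[j] s)))).toReal / s)
      (𝓝[>] 0) (𝓝 K) := by
    intro j _
    have := (hratio.comp (H.tendsto_iterate_invFunOn_left j).1).mul
      (H.tendsto_iterate_invFunOn_left j).2
    rw [mul_one] at this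
    refine this.congr' ?_
    filter_upwards [(H.tendsto_iterate_invFunOn_left j).1.eventually self_mem_nhdsWithin]
      with s (hs : 0 < _)
    rw [Function.comp_apply, div_mul_div_cancel₀ hs.ne']
  have hsum := tendsto_finsetSum _ hterm
  rw [Finset.sum_const, Finset.card_range, nsmul_eq_mul] at hsum
  filter_upwards [hsum.eventually (lt_mem_nhds ((div_lt_iff₀ hK).1 hN)),
    Ioo_mem_nhdsGT zero_lt_one] with s hlt hs
  refine hlt.le.trans ?_
  rw [← Finset.sum_div, ← ENNReal.toReal_sum fun _ _ => measure_ne_top _ _]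
  exact div_le_div_of_nonneg_right
    (ENNReal.toReal_mono (measure_ne_top _ _) (H.sum_measure_Ioo_le hinv N s hs)) hs.1.le

theorem measure_inter_preimage_eq [NullSingletonClass μ] (H : IntermittentMap c T)
    {E : Set ℝ} {S : ℝ} (hS : S ∈ Ioo 0 1) (hE : Ioo 0 S ⊆ E) (hE' : E ⊆ Icc 0 S) :
    μ (Ioo c 1 ∩ T ⁻¹' E) = μ (Ioo c (invFunOn T (Ioo c 1) S)) := by
  obtain ⟨hw, hTw⟩ := invFunOn_mem_of_image_eq H.image_right hS
  refine le_antisymm ?_ (measure_mono fun x hx => ?_)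
  · calc μ (Ioo c 1 ∩ T ⁻¹' E) ≤ μ (Ioc c (invFunOn T (Ioo c 1) S)) :=
          measure_mono fun x ⟨hx, hTx⟩ => ⟨hx.1, not_lt.1 fun hlt =>
            (hE' hTx).2.not_gt (hTw ▸ H.strictMonoOn_right hw hx hlt)⟩
      _ = μ (Ioo c (invFunOn T (Ioo c 1) S)) := measure_congr Ioo_ae_eq_Ioc.symm
  · have hx' : x ∈ Ioo c 1 := ⟨hx.1, hx.2.trans hw.2⟩
    exact ⟨hx', hE ⟨(H.mapsTo_right hx').1,
      (lt_invFunOn_iff H.strictMonoOn_right H.image_right hx' hS).1 hx.2⟩⟩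

theorem tendsto_measure_inter_preimage [IsFiniteMeasure μ] [NullSingletonClass μ]
    (H : IntermittentMap c T) (hinv : MeasurePreserving T μ μ) {K : ℝ} (hK : 0 < K)
    (hratio : Tendsto (fun s => (μ (Ioo c (invFunOn T (Ioo c 1) s))).toReal / s) (𝓝[>] 0)
      (𝓝 K))
    {ι : Type*} {l : Filter ι} {E : ι → Set ℝ} {S : ι → ℝ} (hS : Tendsto S l (𝓝[>] 0))
    (hE : ∀ i, Ioo 0 (S i) ⊆ E i) (hE' : ∀ i, E i ⊆ Icc 0 (S i)) :
    Tendsto (fun i => (μ (Ioo c 1 ∩ T ⁻¹' E i)).toReal / (K * S i)) l (𝓝 1) ∧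
      Tendsto (fun i => (μ (Ioo c 1 ∩ T ⁻¹' E i)).toReal / (μ (E i)).toReal) l (𝓝 0) := by
  have hS1 : ∀ᶠ i in l, S i ∈ Ioo 0 1 := hS.eventually (Ioo_mem_nhdsGT one_pos)
  have hE'eq : ∀ᶠ i in l,
      μ (Ioo c 1 ∩ T ⁻¹' E i) = μ (Ioo c (invFunOn T (Ioo c 1) (S i))) :=
    hS1.mono fun i hi => H.measure_inter_preimage_eq hi (hE i) (hE' i)
  have hEtop : Tendsto (fun i => (μ (E i)).toReal / S i) l atTop :=
    tendsto_atTop_mono' l (hS1.mono fun i hi => div_le_div_of_nonneg_right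
        (ENNReal.toReal_mono (measure_ne_top _ _) (measure_mono (hE i))) hi.1.le)
      ((H.tendsto_measure_Ioo_zero_div_atTop hinv hK hratio).comp hS)
  constructor
  · have := (hratio.comp hS).div_const K
    rw [div_self hK.ne'] at this
    refine this.congr' ?_
    filter_upwards [hE'eq] with i hi
    rw [Function.comp_apply, hi, div_div, mul_comm]
  · refine ((hratio.comp hS).div_atTop hEtop).congr' ?_
    filter_upwards [hE'eq, hS1] with i hi hSi
    rw [Function.comp_apply, hi, div_div_div_cancel_right₀ hSi.1.ne']

end IntermittentMap

theorem stmt18_general {c : ℝ} (hc : c ∈ Set.Ioo (0 : ℝ) 1) {T : ℝ → ℝ}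
    (hmono₁ : StrictMonoOn T (Set.Ioo 0 c)) (hmono₂ : StrictMonoOn T (Set.Ioo c 1))
    (himg₁ : T '' Set.Ioo 0 c = Set.Ioo 0 1) (himg₂ : T '' Set.Ioo c 1 = Set.Ioo 0 1)
    (T₂ : ℝ → ℝ) (h2ext : Set.EqOn T₂ T (Set.Ioo c 1))
    (h2C2 : ContDiffOn ℝ 2 T₂ (Set.Icc c 1))
    (h2exp : ∃ ρ : ℝ, 1 < ρ ∧ ∀ x ∈ Set.Icc c 1, ρ ≤ derivWithin T₂ (Set.Icc c 1) x)
    (T₁ : ℝ → ℝ) (h1ext : Set.EqOn T₁ T (Set.Ioo 0 c))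
    (h1C2 : ContDiffOn ℝ 2 T₁ (Set.Ioc 0 c))
    (h1exp : ∀ ε : ℝ, 0 < ε → ε ≤ c →
      ∃ ρ : ℝ, 1 < ρ ∧ ∀ x ∈ Set.Icc ε c, ρ ≤ derivWithin T₁ (Set.Ioc 0 c) x)
    (hneutral : Tendsto (derivWithin T₁ (Set.Ioc 0 c)) (𝓝[>] (0:ℝ)) (𝓝 1))
    (μ : Measure ℝ) [IsProbabilityMeasure μ] (hac : μ ≪ volume)
    (hinv : MeasurePreserving T μ μ)
    (h : ℝ → ℝ) (hhcont : ContinuousOn h (Set.Ioc 0 1))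
    (hdens : μ = (volume.restrict (Set.Icc (0:ℝ) 1)).withDensity
      (fun x => ENNReal.ofReal (h x)))
    (E : ℕ → Set ℝ) (hEi : ∀ k, (E k).OrdConnected)
    (hE0 : ∀ k, (0 : ℝ) ∈ E k) (hEsub : ∀ k, E k ⊆ Set.Icc 0 1)
    (hEpos : ∀ k, 0 < volume (E k))
    (hEsmall : Tendsto (fun k => volume (E k)) atTop (𝓝 0)) :
    Tendsto (fun k =>
        (μ (Set.Ioo c 1 ∩ T ⁻¹' (E k))).toReal /
          (h c / derivWithin T₂ (Set.Icc c 1) c * (volume (E k)).toReal))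
      atTop (𝓝 1) ∧
    Tendsto (fun k =>
        (μ (Set.Ioo c 1 ∩ T ⁻¹' (E k))).toReal / (μ (E k)).toReal)
      atTop (𝓝 0) := by
  have H : IntermittentMap c T := .of_extensions hc hmono₁ hmono₂ himg₁ himg₂ h2ext
    (h2C2.differentiableOn two_ne_zero) h2exp h1ext (h1C2.differentiableOn two_ne_zero) h1exp
    hneutral
  have : NullSingletonClass μ := ⟨fun x => hac (measure_singleton x)⟩
  have hD := tendsto_div_sub_of_hasDerivWithinAt hc.2
    (h2C2.differentiableOn two_ne_zero c (left_mem_Icc.2 hc.2.le)).hasDerivWithinAt h2ext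
    (tendsto_nhdsGT_of_image_Ioo_eq hc.2 hmono₂ himg₂)
  have hD_pos : 0 < derivWithin T₂ (Icc c 1) c := by
    obtain ⟨ρ, hρ, hbound⟩ := h2exp
    linarith [hbound c (left_mem_Icc.2 hc.2.le)]
  have hhc := H.density_pos hdens hhcont hinv
  have hratio := H.tendsto_measure_Ioo_invFunOn_right_div hdens hhcont hD hD_pos.ne'
  rw [max_eq_left hhc.le] at hratio
  have hE₂ k : E k ⊆ Icc 0 (sSup (E k)) :=
    subset_Icc_zero_sSup (bddAbove_Icc.mono (hEsub k)) ((hEsub k).trans Icc_subset_Ici_self)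
  have hvol k : (volume (E k)).toReal = sSup (E k) := by
    rw [volume_eq_ofReal_sSup (hEi k) (hE0 k) (hEsub k), ENNReal.toReal_ofReal (hE₂ k (hE0 k)).2]
  simpa only [hvol] using H.tendsto_measure_inter_preimage hinv (div_pos hhc hD_pos) hratio
    (tendsto_sSup_nhdsGT_zero hEi hE0 hEsub hEpos hEsmall)
    (fun k => Ioo_zero_sSup_subset (hEi k) (hE0 k)) hE₂

/-- **Asymptotics of `μ(E'_k)` at a neutral fixed point.**
In the intermittent-map setting (two increasing full branches, uniformly expanding `C²`
right branch, `C²` left branch with indifferent fixed point at `0`), with unique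
invariant probability `μ ≪ λ` having continuous density `h` on `(0,1]`: for intervals
`E_k ∋ 0` with `λ(E_k) → 0` and `E'_k := (c,1) ∩ T⁻¹E_k`, one has
`μ(E'_k) ∼ (h(c)/T'(c⁺)) · λ(E_k)` and `μ(E'_k) = o(μ(E_k))` as `k → ∞`. -/
theorem stmt18 {c : ℝ} (hc : c ∈ Set.Ioo (0 : ℝ) 1) {T : ℝ → ℝ}
    (hmaps : Set.MapsTo T (Set.Icc (0:ℝ) 1) (Set.Icc (0:ℝ) 1))
    (hmono₁ : StrictMonoOn T (Set.Ioo 0 c)) (hmono₂ : StrictMonoOn T (Set.Ioo c 1))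
    (himg₁ : T '' Set.Ioo 0 c = Set.Ioo 0 1) (himg₂ : T '' Set.Ioo c 1 = Set.Ioo 0 1)
    (T₂ : ℝ → ℝ) (h2ext : Set.EqOn T₂ T (Set.Ioo c 1))
    (h2C2 : ContDiffOn ℝ 2 T₂ (Set.Icc c 1))
    (h2exp : ∃ ρ : ℝ, 1 < ρ ∧ ∀ x ∈ Set.Icc c 1, ρ ≤ derivWithin T₂ (Set.Icc c 1) x)
    (T₁ : ℝ → ℝ) (h1ext : Set.EqOn T₁ T (Set.Ioo 0 c))
    (h1C2 : ContDiffOn ℝ 2 T₁ (Set.Ioc 0 c))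
    (h1exp : ∀ ε : ℝ, 0 < ε → ε ≤ c →
      ∃ ρ : ℝ, 1 < ρ ∧ ∀ x ∈ Set.Icc ε c, ρ ≤ derivWithin T₁ (Set.Ioc 0 c) x)
    (hfix : T 0 = 0)
    (hneutral : Tendsto (derivWithin T₁ (Set.Ioc 0 c)) (𝓝[>] (0:ℝ)) (𝓝 1))
    (hTinc : ∃ δ : ℝ, 0 < δ ∧
      MonotoneOn (derivWithin T₁ (Set.Ioc 0 c)) (Set.Ioo 0 δ))
    (μ : Measure ℝ) [IsProbabilityMeasure μ] (hac : μ ≪ volume)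
    (hsupp : μ (Set.Icc (0:ℝ) 1)ᶜ = 0) (hinv : MeasurePreserving T μ μ)
    (huniq : ∀ μ' : Measure ℝ, IsProbabilityMeasure μ' → μ' ≪ volume →
      μ' (Set.Icc (0:ℝ) 1)ᶜ = 0 → MeasurePreserving T μ' μ' → μ' = μ)
    (h : ℝ → ℝ) (hhcont : ContinuousOn h (Set.Ioc 0 1))
    (hdens : μ = (volume.restrict (Set.Icc (0:ℝ) 1)).withDensity
      (fun x => ENNReal.ofReal (h x)))
    (E : ℕ → Set ℝ) (hEm : ∀ k, MeasurableSet (E k)) (hEi : ∀ k, (E k).OrdConnected)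
    (hE0 : ∀ k, (0 : ℝ) ∈ E k) (hEsub : ∀ k, E k ⊆ Set.Icc 0 1)
    (hEpos : ∀ k, 0 < volume (E k))
    (hEsmall : Tendsto (fun k => volume (E k)) atTop (𝓝 0)) :
    Tendsto (fun k =>
        (μ (Set.Ioo c 1 ∩ T ⁻¹' (E k))).toReal /
          (h c / derivWithin T₂ (Set.Icc c 1) c * (volume (E k)).toReal))
      atTop (𝓝 1) ∧
    Tendsto (fun k =>
        (μ (Set.Ioo c 1 ∩ T ⁻¹' (E k))).toReal / (μ (E k)).toReal)
      atTop (𝓝 0) :=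
  stmt18_general hc hmono₁ hmono₂ himg₁ himg₂ T₂ h2ext h2C2 h2exp T₁ h1ext h1C2 h1exp hneutral μ hac
    hinv h hhcont hdens E hEi hE0 hEsub hEpos hEsmall
end
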